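/- arXiv:1710.07521 — 6 statements merged into one kernel-verified Lean document; each statement's English description precedes it below -/
import Mathlib

section
/- Let R be a real closed extension field of ℝ, n ∈ ℕ, and let M be a quadratic module of the polynomial ring 𝒪_R[X₁,…,Xₙ]. Then the following are equivalent: (a) M is Archimedean; (b) there exists N ∈ ℕ with N − (X₁² + … + Xₙ²) ∈ M; (c) there exists N ∈ ℕ such that N + Xᵢ ∈ M and N − Xᵢ ∈ M for all i ∈ {1,…,n}. -/
open MvPolynomial Finset

noncomputable section

/-- The subring of finite elements of a linearly ordered field. -/
def Ofin (R : Type) [Field R] [LinearOrder R] [IsStrictOrderedRing R] : Subring R where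
  carrier := {a : R | ∃ N : ℕ, |a| ≤ (N : R)}
  zero_mem' := ⟨0, by simp⟩
  one_mem' := ⟨1, by simp⟩
  add_mem' := by
    rintro a b ⟨N, hN⟩ ⟨M, hM⟩
    exact ⟨N + M, by push_cast; exact (abs_add_le a b).trans (add_le_add hN hM)⟩
  mul_mem' := by
    rintro a b ⟨N, hN⟩ ⟨M, hM⟩
    refine ⟨N * M, ?_⟩
    push_cast
    calc |a * b| = |a| * |b| := abs_mul a b
    _ ≤ (N : _) * (M : _) := mul_le_mul hN hM (abs_nonneg b) (Nat.cast_nonneg N)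
  neg_mem' := by
    rintro a ⟨N, hN⟩
    exact ⟨N, by rwa [abs_neg]⟩

/-- A real closed extension field of `ℝ`: an order-preserving ring embedding `ι : ℝ →+* R`
such that every nonnegative element of `R` is a square and every polynomial over `R` of
odd degree has a root. -/
structure RealClosedExt (R : Type) [Field R] [LinearOrder R] [IsStrictOrderedRing R] where
  ι : ℝ →+* R
  mono : ∀ a b : ℝ, a ≤ b → ι a ≤ ι b
  sq : ∀ a : R, 0 ≤ a → ∃ b : R, b ^ 2 = a
  oddRoot : ∀ p : Polynomial R, Odd p.natDegree → ∃ x : R, p.eval x = 0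

/-- An infinitesimal element of a linearly ordered field. -/
def Infinitesimal {R : Type} [Field R] [LinearOrder R] [IsStrictOrderedRing R] (a : R) : Prop :=
  ∀ N : ℕ, 0 < N → |a| ≤ (N : R)⁻¹

/-- `st` is a standard part map if `a - ι (st a)` is infinitesimal for every finite `a`. -/
def IsStandardPart {R : Type} [Field R] [LinearOrder R] [IsStrictOrderedRing R] (e : RealClosedExt R) (st : R → ℝ) : Prop :=
  ∀ a : R, a ∈ Ofin R → Infinitesimal (a - e.ι (st a))

/-- The embedding `ℝ →+* 𝒪_R` induced by `ι`. -/
def RealClosedExt.toOfin {R : Type} [Field R] [LinearOrder R] [IsStrictOrderedRing R] (e : RealClosedExt R) :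
    ℝ →+* Ofin R where
  toFun r := ⟨e.ι r, by
    refine ⟨⌈|r|⌉₊, ?_⟩
    have h2 : |e.ι r| ≤ e.ι |r| := by
      rw [abs_le]
      constructor
      · have h := e.mono (-|r|) r (neg_abs_le r)
        rwa [map_neg] at h
      · exact e.mono r |r| (le_abs_self r)
    refine h2.trans ?_
    have h3 := e.mono |r| (⌈|r|⌉₊ : ℝ) (Nat.le_ceil _)
    rwa [map_natCast] at h3⟩
  map_one' := Subtype.ext (map_one e.ι)
  map_mul' a b := Subtype.ext (map_mul e.ι a b)
  map_zero' := Subtype.ext (map_zero e.ι)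
  map_add' a b := Subtype.ext (map_add e.ι a b)

/-- Quadratic module of a commutative ring. -/
def IsQuadraticModule {A : Type*} [CommRing A] (M : Set A) : Prop :=
  (0 : A) ∈ M ∧ (1 : A) ∈ M ∧ (∀ a ∈ M, ∀ b ∈ M, a + b ∈ M) ∧
    ∀ a : A, ∀ p ∈ M, a ^ 2 * p ∈ M

/-- Archimedean subset of a commutative ring. -/
def IsArchimedean {A : Type*} [CommRing A] (M : Set A) : Prop :=
  ∀ a : A, ∃ N : ℕ, (N : A) + a ∈ M ∧ (N : A) - a ∈ M

/-- The ideal `I_x` generated by the `X i - x i`. -/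
def idealAt {R : Type} [Field R] [LinearOrder R] [IsStrictOrderedRing R] {n : ℕ} (x : Fin n → Ofin R) :
    Ideal (MvPolynomial (Fin n) (Ofin R)) :=
  Ideal.span (Set.range fun i => X i - C (x i))

/-- The polynomial `u_x = (X₁-x₁)² + … + (Xₙ-xₙ)²` over `𝒪_R`. -/
def uPolyO {R : Type} [Field R] [LinearOrder R] [IsStrictOrderedRing R] {n : ℕ} (x : Fin n → Ofin R) :
    MvPolynomial (Fin n) (Ofin R) :=
  ∑ i, (X i - C (x i)) ^ 2

/-- Evaluation of a polynomial with coefficients in `𝒪_R` at a point of `Rⁿ`. -/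
def evalR {R : Type} [Field R] [LinearOrder R] [IsStrictOrderedRing R] {n : ℕ} (x : Fin n → R)
    (p : MvPolynomial (Fin n) (Ofin R)) : R :=
  eval₂ (Ofin R).subtype x p

/-- `vᵀ (Hess p)(x) v`, computed in `R`, for a real vector `v`. -/
def hessQuadO {R : Type} [Field R] [LinearOrder R] [IsStrictOrderedRing R] (e : RealClosedExt R) {n : ℕ}
    (p : MvPolynomial (Fin n) (Ofin R)) (x : Fin n → Ofin R) (v : Fin n → ℝ) : R :=
  ∑ a, ∑ b, e.ι (v a) * ((eval x (pderiv a (pderiv b p)) : Ofin R) : R) * e.ι (v b)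

/-- The set `S := {x ∈ ℝⁿ : st (p(x)) ≥ 0 for all p ∈ M}`. -/
def Sof {R : Type} [Field R] [LinearOrder R] [IsStrictOrderedRing R] (e : RealClosedExt R) (st : R → ℝ) {n : ℕ}
    (M : Set (MvPolynomial (Fin n) (Ofin R))) : Set (Fin n → ℝ) :=
  {y | ∀ p ∈ M, 0 ≤ st (evalR (fun i => e.ι (y i)) p)}

/-- A state of `(I, M ∩ I, u)`: an `ℝ`-linear functional on `I`, nonnegative on `M ∩ I` and
normalized at `u` (encoded as a function on the polynomial ring whose values off `I`
are irrelevant). -/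
def IsStateOn {R : Type} [Field R] [LinearOrder R] [IsStrictOrderedRing R] (e : RealClosedExt R) {n : ℕ}
    (M : Set (MvPolynomial (Fin n) (Ofin R))) (I : Ideal (MvPolynomial (Fin n) (Ofin R)))
    (u : MvPolynomial (Fin n) (Ofin R)) (φ : MvPolynomial (Fin n) (Ofin R) → ℝ) : Prop :=
  (∀ p ∈ I, ∀ q ∈ I, φ (p + q) = φ p + φ q) ∧
  (∀ r : ℝ, ∀ p ∈ I, φ (C (e.toOfin r) * p) = r * φ p) ∧
  (∀ p ∈ I, p ∈ M → 0 ≤ φ p) ∧ φ u = 1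

/-- A pure state: an extreme point of the state space (no two distinct states have it
as their midpoint). -/
def IsPureStateOn {R : Type} [Field R] [LinearOrder R] [IsStrictOrderedRing R] (e : RealClosedExt R) {n : ℕ}
    (M : Set (MvPolynomial (Fin n) (Ofin R))) (I : Ideal (MvPolynomial (Fin n) (Ofin R)))
    (u : MvPolynomial (Fin n) (Ofin R)) (φ : MvPolynomial (Fin n) (Ofin R) → ℝ) : Prop :=
  IsStateOn e M I u φ ∧
    ∀ ψ₁ ψ₂, IsStateOn e M I u ψ₁ → IsStateOn e M I u ψ₂ →
      (∀ p ∈ I, φ p = (ψ₁ p + ψ₂ p) / 2) → ∀ p ∈ I, ψ₁ p = ψ₂ p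

/-- A sum of squares in a commutative ring. -/
def IsSOS {A : Type*} [CommRing A] (p : A) : Prop :=
  ∃ (k : ℕ) (q : Fin k → A), p = ∑ i, (q i) ^ 2

/-- The basic closed semialgebraic set `S(g)`. -/
def Sset {n m : ℕ} (g : Fin m → MvPolynomial (Fin n) ℝ) : Set (Fin n → ℝ) :=
  {x | ∀ i, 0 ≤ eval x (g i)}

/-- The quadratic module `M(g)` generated by `g` in `ℝ[X]`. -/
def QModGen {n m : ℕ} (g : Fin m → MvPolynomial (Fin n) ℝ) : Set (MvPolynomial (Fin n) ℝ) :=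
  {f | ∃ (σ₀ : MvPolynomial (Fin n) ℝ) (σ : Fin m → MvPolynomial (Fin n) ℝ),
    IsSOS σ₀ ∧ (∀ i, IsSOS (σ i)) ∧ f = σ₀ + ∑ i, σ i * g i}

/-- `g` extended by `g₀ := 1` (the index `none` corresponds to `g₀`). -/
def gext {n m : ℕ} (g : Fin m → MvPolynomial (Fin n) ℝ) :
    Option (Fin m) → MvPolynomial (Fin n) ℝ :=
  fun o => o.elim 1 g

/-- The `d`-truncated quadratic module `M_d(g)`: finite sums of terms `p² gᵢ`
(`g₀ := 1`), each of degree at most `d`. -/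
def Mtrunc {n m : ℕ} (g : Fin m → MvPolynomial (Fin n) ℝ) (d : ℕ) :
    Set (MvPolynomial (Fin n) ℝ) :=
  {f | ∃ (k : ℕ) (idx : Fin k → Option (Fin m)) (p : Fin k → MvPolynomial (Fin n) ℝ),
    (∀ j, ((p j) ^ 2 * gext g (idx j)).totalDegree ≤ d) ∧
      f = ∑ j, (p j) ^ 2 * gext g (idx j)}

/-- The polynomial `u_x = (X₁-x₁)² + … + (Xₙ-xₙ)²` over `ℝ`. -/
def uPoly {n : ℕ} (x : Fin n → ℝ) : MvPolynomial (Fin n) ℝ :=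
  ∑ i, (X i - C (x i)) ^ 2

/-- The open Euclidean ball of radius `ε` around `x`. -/
def eball {n : ℕ} (x : Fin n → ℝ) (ε : ℝ) : Set (Fin n → ℝ) :=
  {y | ∑ i, (y i - x i) ^ 2 < ε ^ 2}

/-- `vᵀ (Hess f)(x) v`, where `Hess f` is the formal Hessian matrix of `f`. -/
def hessQuad {n : ℕ} (f : MvPolynomial (Fin n) ℝ) (x : Fin n → ℝ) (v : Fin n → ℝ) : ℝ :=
  ∑ a, ∑ b, v a * eval x (pderiv a (pderiv b f)) * v b

/-- `(∇ f)(x)ᵀ v`. -/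
def gradDot {n : ℕ} (f : MvPolynomial (Fin n) ℝ) (x v : Fin n → ℝ) : ℝ :=
  ∑ i, eval x (pderiv i f) * v i

/-- Strict quasiconcavity of `g` at `x`. -/
def StrictQuasiconcaveAt {n : ℕ} (g : MvPolynomial (Fin n) ℝ) (x : Fin n → ℝ) : Prop :=
  ∀ v : Fin n → ℝ, v ≠ 0 → gradDot g x v = 0 → hessQuad g x v < 0

/-- The real zero set `Z(g)`. -/
def Zset {n : ℕ} (g : MvPolynomial (Fin n) ℝ) : Set (Fin n → ℝ) :=
  {x | eval x g = 0}

/-- The convex boundary `convbd S = S ∩ ∂(conv S)`. -/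
def convbd {n : ℕ} (S : Set (Fin n → ℝ)) : Set (Fin n → ℝ) :=
  S ∩ frontier (convexHull ℝ S)

/-- The optimal value `las_d(f, g)` of the degree-`d` Lasserre relaxation. -/
def lasVal {n m : ℕ} (g : Fin m → MvPolynomial (Fin n) ℝ) (d : ℕ)
    (f : MvPolynomial (Fin n) ℝ) : EReal :=
  ⨅ L : {L : MvPolynomial (Fin n) ℝ →ₗ[ℝ] ℝ // (∀ p ∈ Mtrunc g d, 0 ≤ L p) ∧ L 1 = 1},
    ((L.1 f : ℝ) : EReal)

/-- The degree-`d` Lasserre relaxation set `S_d(g)`. -/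
def lasRelax {n m : ℕ} (g : Fin m → MvPolynomial (Fin n) ℝ) (d : ℕ) : Set (Fin n → ℝ) :=
  {y | ∃ L : MvPolynomial (Fin n) ℝ →ₗ[ℝ] ℝ,
    (∀ p ∈ Mtrunc g d, 0 ≤ L p) ∧ L 1 = 1 ∧ ∀ i, L (X i) = y i}


/-!
Call `p` bounded by `M` if `N - p² ∈ M` for some `N ∈ ℕ`. Once `1/2` and the `1/(2N)` are
available, this is equivalent to `N ± p ∈ M` for some `N`, through the identities
`N + 1 ± p = (N - p²) + (p ± 1/2)² + 3/4` and
`2N (N² - p²) = (N + p)² (N - p) + (N - p)² (N + p)`.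
The bounded elements are closed under sums and products, so they form the whole polynomial ring
as soon as they contain the constants and the variables. Constants of `𝒪_R` are bounded because
a nonnegative element of `𝒪_R` has a square root in `R`, which is again finite.
-/

namespace IsQuadraticModule

variable {A : Type*} [CommRing A] {M : Set A}

def SqBounded (M : Set A) (p : A) : Prop :=
  ∃ N : ℕ, (N : A) - p ^ 2 ∈ M

theorem zero_mem (hM : IsQuadraticModule M) : (0 : A) ∈ M :=
  hM.1

theorem one_mem (hM : IsQuadraticModule M) : (1 : A) ∈ M :=
  hM.2.1

theorem add_mem (hM : IsQuadraticModule M) {p q : A} (hp : p ∈ M) (hq : q ∈ M) : p + q ∈ M :=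
  hM.2.2.1 p hp q hq

theorem sq_mul_mem (hM : IsQuadraticModule M) (a : A) {p : A} (hp : p ∈ M) : a ^ 2 * p ∈ M :=
  hM.2.2.2 a p hp

theorem sq_mem (hM : IsQuadraticModule M) (a : A) : a ^ 2 ∈ M := by
  simpa using hM.sq_mul_mem a hM.one_mem

theorem sum_mem (hM : IsQuadraticModule M) {ι : Type*} {s : Finset ι} {f : ι → A}
    (hf : ∀ i ∈ s, f i ∈ M) : ∑ i ∈ s, f i ∈ M :=
  Finset.sum_induction f (· ∈ M) (fun _ _ => hM.add_mem) hM.zero_mem hf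

theorem natCast_mul_mem (hM : IsQuadraticModule M) (N : ℕ) {p : A} (hp : p ∈ M) :
    (N : A) * p ∈ M := by
  simpa using hM.sum_mem (s := Finset.range N) fun _ _ => hp

theorem sqBounded_add (hM : IsQuadraticModule M) {p q : A}
    (hp : SqBounded M p) (hq : SqBounded M q) : SqBounded M (p + q) := by
  obtain ⟨K, hK⟩ := hp
  obtain ⟨L, hL⟩ := hq
  refine ⟨2 * (K + L), ?_⟩
  have h : ((2 * (K + L) : ℕ) : A) - (p + q) ^ 2 =
      (p - q) ^ 2 + (2 : ℕ) * ((K : A) - p ^ 2) + (2 : ℕ) * ((L : A) - q ^ 2) := by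
    push_cast; ring
  rw [h]
  exact hM.add_mem (hM.add_mem (hM.sq_mem _) (hM.natCast_mul_mem 2 hK)) (hM.natCast_mul_mem 2 hL)

theorem sqBounded_mul (hM : IsQuadraticModule M) {p q : A}
    (hp : SqBounded M p) (hq : SqBounded M q) : SqBounded M (p * q) := by
  obtain ⟨K, hK⟩ := hp
  obtain ⟨L, hL⟩ := hq
  refine ⟨K * L, ?_⟩
  have h : ((K * L : ℕ) : A) - (p * q) ^ 2 =
      q ^ 2 * ((K : A) - p ^ 2) + K * ((L : A) - q ^ 2) := by
    push_cast; ring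
  rw [h]
  exact hM.add_mem (hM.sq_mul_mem q hK) (hM.natCast_mul_mem K hL)

theorem sub_sq_mem_of_sub_sum_sq_mem (hM : IsQuadraticModule M) {ι : Type*} [DecidableEq ι]
    {s : Finset ι} {f : ι → A} {N : ℕ} (h : (N : A) - ∑ j ∈ s, f j ^ 2 ∈ M) {i : ι} (hi : i ∈ s) :
    (N : A) - f i ^ 2 ∈ M := by
  rw [← Finset.add_sum_erase s _ hi] at h
  convert hM.add_mem h (hM.sum_mem (s := s.erase i) fun j _ => hM.sq_mem (f j)) using 1
  ring

section RatAlgebra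

variable [Algebra ℚ A]

theorem add_mem_and_sub_mem_of_sub_sq_mem (hM : IsQuadraticModule M) {p : A} {N : ℕ}
    (h : (N : A) - p ^ 2 ∈ M) :
    ((N + 1 : ℕ) : A) + p ∈ M ∧ ((N + 1 : ℕ) : A) - p ∈ M := by
  set u := algebraMap ℚ A 2⁻¹
  have hu : u * 2 = 1 := by
    rw [← map_ofNat (algebraMap ℚ A), ← map_mul]; norm_num
  have hu₃ : u ^ 2 * (3 : ℕ) ∈ M := hM.sq_mul_mem u (by simpa using hM.natCast_mul_mem 3 hM.one_mem)
  constructor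
  · have h' : ((N + 1 : ℕ) : A) + p = ((N : A) - p ^ 2) + (p + u) ^ 2 + u ^ 2 * (3 : ℕ) := by
      push_cast; linear_combination (-p - 1 - 2 * u) * hu
    rw [h']
    exact hM.add_mem (hM.add_mem h (hM.sq_mem _)) hu₃
  · have h' : ((N + 1 : ℕ) : A) - p = ((N : A) - p ^ 2) + (p - u) ^ 2 + u ^ 2 * (3 : ℕ) := by
      push_cast; linear_combination (p - 1 - 2 * u) * hu
    rw [h']
    exact hM.add_mem (hM.add_mem h (hM.sq_mem _)) hu₃

theorem sub_sq_mem_of_add_mem_of_sub_mem (hM : IsQuadraticModule M) {p : A} {N : ℕ}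
    (h₁ : (N : A) + p ∈ M) (h₂ : (N : A) - p ∈ M) : (((N + 1) ^ 2 : ℕ) : A) - p ^ 2 ∈ M := by
  set m : ℕ := N + 1
  have h₁' : (m : A) + p ∈ M := by simpa [m, add_right_comm] using hM.add_mem h₁ hM.one_mem
  have h₂' : (m : A) - p ∈ M := by simpa [m, sub_add_eq_add_sub] using hM.add_mem h₂ hM.one_mem
  set u := algebraMap ℚ A ((2 * m : ℕ) : ℚ)⁻¹
  have hu : u * (2 * m : ℕ) = 1 := by
    rw [← map_natCast (algebraMap ℚ A), ← map_mul, inv_mul_cancel₀ (by positivity), map_one]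
  have h : ((m ^ 2 : ℕ) : A) - p ^ 2 = u ^ 2 *
      ((2 * m : ℕ) * (((m : A) + p) ^ 2 * ((m : A) - p) + ((m : A) - p) ^ 2 * ((m : A) + p))) := by
    push_cast at hu ⊢
    linear_combination (p ^ 2 - (m : A) ^ 2) * (1 + u * (2 * m)) * hu
  rw [h]
  exact hM.sq_mul_mem u <| hM.natCast_mul_mem _ <|
    hM.add_mem (hM.sq_mul_mem _ h₂') (hM.sq_mul_mem _ h₁')

theorem isArchimedean_iff_forall_sqBounded (hM : IsQuadraticModule M) :
    IsArchimedean M ↔ ∀ p, SqBounded M p :=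
  ⟨fun h p => let ⟨_, h₁, h₂⟩ := h p; ⟨_, hM.sub_sq_mem_of_add_mem_of_sub_mem h₁ h₂⟩,
    fun h p => let ⟨_, hN⟩ := h p; ⟨_, hM.add_mem_and_sub_mem_of_sub_sq_mem hN⟩⟩

end RatAlgebra

theorem sqBounded_of_sqBounded_C_of_sqBounded_X {σ S : Type*} [CommRing S]
    {M : Set (MvPolynomial σ S)} (hM : IsQuadraticModule M)
    (hC : ∀ c, SqBounded M (C c)) (hX : ∀ i, SqBounded M (X i)) (p : MvPolynomial σ S) :
    SqBounded M p := by
  induction p using MvPolynomial.induction_on with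
  | C c => exact hC c
  | add p q hp hq => exact hM.sqBounded_add hp hq
  | mul_X p i hp => exact hM.sqBounded_mul hp (hX i)

end IsQuadraticModule

namespace Ofin

variable {R : Type} [Field R] [LinearOrder R] [IsStrictOrderedRing R]

theorem ratCast_mem (q : ℚ) : (q : R) ∈ Ofin R :=
  ⟨⌈|q|⌉₊, by simpa [← Rat.cast_abs] using (Rat.cast_le (K := R)).2 (Nat.le_ceil |q|)⟩

instance : Algebra ℚ (Ofin R) :=
  ((Rat.castHom R).codRestrict (Ofin R) ratCast_mem).toAlgebra

theorem exists_sq_eq (e : RealClosedExt R) {c : Ofin R} (hc : 0 ≤ (c : R)) :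
    ∃ b : Ofin R, b ^ 2 = c := by
  obtain ⟨b, hb⟩ := e.sq c hc
  obtain ⟨K, hK⟩ := c.2
  have hbK : |b| ≤ (K + 1 : ℕ) := by
    have : |b| ^ 2 ≤ K := by rw [sq_abs, hb]; exact (le_abs_self _).trans hK
    push_cast
    nlinarith [abs_nonneg b]
  exact ⟨⟨b, K + 1, hbK⟩, Subtype.ext (by simpa using hb)⟩

theorem sqBounded_C (e : RealClosedExt R) {σ : Type*} {M : Set (MvPolynomial σ (Ofin R))}
    (hM : IsQuadraticModule M) (c : Ofin R) : IsQuadraticModule.SqBounded M (C c) := by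
  obtain ⟨K, hK⟩ := c.2
  have hc : (0 : R) ≤ ((K ^ 2 - c ^ 2 : Ofin R) : R) := by
    push_cast
    nlinarith [sq_abs (c : R), abs_nonneg (c : R)]
  obtain ⟨b, hb⟩ := exists_sq_eq e hc
  refine ⟨K ^ 2, ?_⟩
  have h : ((K ^ 2 : ℕ) : MvPolynomial σ (Ofin R)) - C c ^ 2 = C b ^ 2 := by
    rw [← map_pow C b, hb, map_sub, map_pow, map_pow, map_natCast, Nat.cast_pow]
  rw [h]
  exact hM.sq_mem _

end Ofin

theorem statement_0 {R : Type} [Field R] [LinearOrder R] [IsStrictOrderedRing R] (e : RealClosedExt R) (n : ℕ)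
    (M : Set (MvPolynomial (Fin n) (Ofin R))) (hM : IsQuadraticModule M) :
    (IsArchimedean M ↔
      ∃ N : ℕ, (N : MvPolynomial (Fin n) (Ofin R)) - ∑ i, (X i) ^ 2 ∈ M) ∧
    (IsArchimedean M ↔
      ∃ N : ℕ, ∀ i : Fin n,
        (N : MvPolynomial (Fin n) (Ofin R)) + X i ∈ M ∧
        (N : MvPolynomial (Fin n) (Ofin R)) - X i ∈ M) := by
  have arch_of_sqBounded_X (hX : ∀ i, IsQuadraticModule.SqBounded M (X i)) : IsArchimedean M :=
    hM.isArchimedean_iff_forall_sqBounded.2 <|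
      hM.sqBounded_of_sqBounded_C_of_sqBounded_X (Ofin.sqBounded_C e hM) hX
  have sum_bound_of_arch (h : IsArchimedean M) :
      ∃ N : ℕ, (N : MvPolynomial (Fin n) (Ofin R)) - ∑ i, X i ^ 2 ∈ M :=
    (h _).imp fun _ => And.right
  constructor
  · exact ⟨sum_bound_of_arch, fun ⟨N, hN⟩ => arch_of_sqBounded_X fun i =>
      ⟨N, hM.sub_sq_mem_of_sub_sum_sq_mem hN (mem_univ i)⟩⟩
  · refine ⟨fun h => ?_, fun ⟨N, hN⟩ => arch_of_sqBounded_X fun i =>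
      ⟨_, hM.sub_sq_mem_of_add_mem_of_sub_mem (hN i).1 (hN i).2⟩⟩
    obtain ⟨N, hN⟩ := sum_bound_of_arch h
    exact ⟨N + 1, fun i =>
      hM.add_mem_and_sub_mem_of_sub_sq_mem (hM.sub_sq_mem_of_sub_sum_sq_mem hN (mem_univ i))⟩
end
end

section
/- Let R be a real closed extension field of ℝ, let x ∈ 𝒪_Rⁿ, and let φ : I_x² → ℝ be an ℝ-linear map such that φ(p) ≥ 0 for every p ∈ I_x² that is a sum of squares of polynomials in 𝒪_R[X₁,…,Xₙ], φ(u_x) = 1, and φ vanishes on I_x³. Then there exist v₁,…,vₙ ∈ ℝⁿ with Σ_{i=1}^n vᵢᵀvᵢ = 1 such that φ(p) = (1/2)·st(Σ_{i=1}^n vᵢᵀ(Hess p)(x)vᵢ) for all p ∈ I_x², where Hess p denotes the matrix of formal second partial derivatives of p. -/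
open MvPolynomial Finset

/-!
Write `g_a = X_a - x_a`, so that `I_x = ker (eval x)` is spanned by the `g_a`. Modulo `I_x³`,
every `p ∈ I_x²` is a quadratic form `∑ c_ab g_a g_b` with coefficients in `𝒪_R`, and the Hessian
of `p` at `x` is `c + cᵀ`. Positivity of `φ` on squares forces `φ` to vanish on infinitesimal
multiples of elements of `I_x²`, so `φ (c y) = st(c) φ(y)` and `φ(p) = ∑ st(c_ab) A_ab` with
`A_ab = φ(g_a g_b)`. The matrix `A` is positive semidefinite with trace `φ(u_x) = 1`; writing
`A = BᵀB`, the rows of `B` are the required vectors.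
-/

theorem eq_zero_of_forall_abs_le_div_nat {v K : ℝ} (h : ∀ N : ℕ, 0 < N → |v| ≤ K / N) :
    v = 0 :=
  abs_nonpos_iff.mp <| ge_of_tendsto (tendsto_const_div_atTop_nhds_zero_nat K)
    (Filter.eventually_ge_atTop 1 |>.mono h)

section StandardPart

variable {R : Type} [Field R] [LinearOrder R] [IsStrictOrderedRing R]

namespace Infinitesimal

theorem add {a b : R} (ha : Infinitesimal a) (hb : Infinitesimal b) :
    Infinitesimal (a + b) := by
  intro N hN
  have h2N : ((2 * N : ℕ) : R)⁻¹ + ((2 * N : ℕ) : R)⁻¹ = (N : R)⁻¹ := by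
    push_cast; field_simp; norm_num
  calc |a + b| ≤ |a| + |b| := abs_add_le a b
    _ ≤ ((2 * N : ℕ) : R)⁻¹ + ((2 * N : ℕ) : R)⁻¹ :=
      add_le_add (ha _ (by omega)) (hb _ (by omega))
    _ = (N : R)⁻¹ := h2N

theorem neg {a : R} (ha : Infinitesimal a) : Infinitesimal (-a) := by
  intro N hN
  rw [abs_neg]
  exact ha N hN

theorem mul_of_mem_Ofin {a b : R} (ha : Infinitesimal a) (hb : b ∈ Ofin R) :
    Infinitesimal (a * b) := by
  obtain ⟨M, hM⟩ := hb
  intro N hN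
  have hM1 : (0 : R) < M + 1 := by positivity
  calc |a * b| = |a| * |b| := abs_mul a b
    _ ≤ ((N * (M + 1) : ℕ) : R)⁻¹ * (M + 1) :=
      mul_le_mul (ha _ (by positivity)) (by linarith) (abs_nonneg b) (by positivity)
    _ = (N : R)⁻¹ := by push_cast; field_simp

end Infinitesimal

namespace RealClosedExt

variable (e : RealClosedExt R)

theorem strictMono_ι : StrictMono e.ι :=
  Monotone.strictMono_of_injective (fun _ _ hab => e.mono _ _ hab) e.ι.injective

theorem abs_ι (r : ℝ) : |e.ι r| = e.ι |r| := by
  rcases abs_cases r with ⟨hr, h0⟩ | ⟨hr, h0⟩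
  · rw [hr, abs_of_nonneg (map_zero e.ι ▸ e.mono _ _ h0)]
  · rw [hr, map_neg, abs_of_nonpos (map_zero e.ι ▸ e.mono _ _ h0.le)]

theorem eq_zero_of_infinitesimal_ι {r : ℝ} (h : Infinitesimal (e.ι r)) : r = 0 := by
  refine eq_zero_of_forall_abs_le_div_nat (K := 1) fun N hN => ?_
  have hN' := h N hN
  rw [abs_ι, ← map_natCast e.ι, ← map_inv₀, e.strictMono_ι.le_iff_le] at hN'
  rwa [one_div]

include e in
theorem exists_mul_self_eq (c : Ofin R) (hc : 0 ≤ (c : R)) : ∃ b : Ofin R, b * b = c := by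
  obtain ⟨b, hb⟩ := e.sq c hc
  obtain ⟨N, hN⟩ := c.2
  have hbN : |b| ≤ (N + 1 : ℕ) := by
    rw [abs_of_nonneg hc, ← hb] at hN
    push_cast
    nlinarith [sq_nonneg (|b| - 1), sq_abs b]
  exact ⟨⟨b, N + 1, hbN⟩, Subtype.ext (show b * b = c by rw [← hb, pow_two])⟩

end RealClosedExt

namespace IsStandardPart

variable {e : RealClosedExt R} {st : R → ℝ} (hst : IsStandardPart e st)
include hst

theorem eq_of_infinitesimal_sub {a : R} (ha : a ∈ Ofin R) {r : ℝ}
    (h : Infinitesimal (a - e.ι r)) : st a = r := by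
  have hdiff : Infinitesimal (e.ι (r - st a)) := by
    rw [show e.ι (r - st a) = (a - e.ι (st a)) + -(a - e.ι r) by rw [map_sub]; ring]
    exact (hst a ha).add h.neg
  linarith [e.eq_zero_of_infinitesimal_ι hdiff]

theorem st_ι (r : ℝ) : st (e.ι r) = r :=
  hst.eq_of_infinitesimal_sub (a := e.ι r) (e.toOfin r).2 fun N _ => by simp

def toRingHom : Ofin R →+* ℝ where
  toFun a := st a
  map_one' := by simpa using hst.st_ι 1
  map_zero' := by simpa using hst.st_ι 0
  map_add' a b := by
    refine hst.eq_of_infinitesimal_sub (a + b).2 ?_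
    rw [show ((a + b : Ofin R) : R) - e.ι (st a + st b) =
      (a - e.ι (st a)) + (b - e.ι (st b)) by push_cast; rw [map_add]; ring]
    exact (hst a a.2).add (hst b b.2)
  map_mul' a b := by
    refine hst.eq_of_infinitesimal_sub (a * b).2 ?_
    rw [show ((a * b : Ofin R) : R) - e.ι (st a * st b) =
      (a - e.ι (st a)) * b + (b - e.ι (st b)) * e.ι (st a) by push_cast; rw [map_mul]; ring]
    exact ((hst a a.2).mul_of_mem_Ofin b.2).add ((hst b b.2).mul_of_mem_Ofin (e.toOfin _).2)

@[simp]
theorem toRingHom_apply (a : Ofin R) : hst.toRingHom a = st a := rfl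

@[simp]
theorem toRingHom_toOfin (r : ℝ) : hst.toRingHom (e.toOfin r) = r := hst.st_ι r

end IsStandardPart

end StandardPart

section AdditiveOn

variable {A M : Type*} [Ring A] [AddCommGroup M] [Module A M] {J : Submodule A M}
  {φ : M → ℝ} (hadd : ∀ p ∈ J, ∀ q ∈ J, φ (p + q) = φ p + φ q)
include hadd

theorem map_zero_of_additiveOn : φ 0 = 0 := by
  simpa using hadd 0 J.zero_mem 0 J.zero_mem

theorem map_sub_of_additiveOn {p q : M} (hp : p ∈ J) (hq : q ∈ J) : φ (p - q) = φ p - φ q := by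
  have h := hadd q hq (p - q) (J.sub_mem hp hq)
  rw [add_sub_cancel] at h
  linarith

theorem map_sum_of_additiveOn {ι : Type*} (s : Finset ι) {f : ι → M} (hf : ∀ i ∈ s, f i ∈ J) :
    φ (∑ i ∈ s, f i) = ∑ i ∈ s, φ (f i) := by
  classical
  induction s using Finset.induction_on with
  | empty => simpa using map_zero_of_additiveOn hadd
  | insert a s ha ih =>
    rw [sum_insert ha, sum_insert ha, hadd _ (hf a (mem_insert_self a s)) _
      (J.sum_mem fun i hi => hf i (mem_insert_of_mem hi)),
      ih fun i hi => hf i (mem_insert_of_mem hi)]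

end AdditiveOn

section CenteredPolynomials

variable {S σ : Type*} [CommRing S] (x : σ → S)

theorem sub_C_eval_mem_span (q : MvPolynomial σ S) :
    q - C (eval x q) ∈ Ideal.span (Set.range fun i => X i - C (x i)) := by
  induction q using MvPolynomial.induction_on with
  | C a => simp
  | add p q hp hq =>
    rw [show p + q - C (eval x (p + q)) = (p - C (eval x p)) + (q - C (eval x q)) by
      simp only [map_add]; ring]
    exact add_mem hp hq
  | mul_X p i hp =>
    rw [show p * X i - C (eval x (p * X i)) =
        p * (X i - C (x i)) + C (x i) * (p - C (eval x p)) by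
      simp only [map_mul, eval_X]; ring]
    exact add_mem (Ideal.mul_mem_left _ _ (Ideal.subset_span ⟨i, rfl⟩))
      (Ideal.mul_mem_left _ _ hp)

theorem ker_eval_eq_span :
    RingHom.ker (eval x) = Ideal.span (Set.range fun i => X i - C (x i)) := by
  refine le_antisymm (fun q hq => ?_) (Ideal.span_le.2 ?_)
  · simpa [RingHom.mem_ker.mp hq] using sub_C_eval_mem_span x q
  · rintro _ ⟨i, rfl⟩
    simp

theorem X_sub_C_mem_ker_eval (i : σ) : X i - C (x i) ∈ RingHom.ker (eval x) := by
  simp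

theorem X_sub_C_mul_X_sub_C_mem_sq (a b : σ) :
    (X a - C (x a)) * (X b - C (x b)) ∈ RingHom.ker (eval x) ^ 2 :=
  pow_two (RingHom.ker (eval x)) ▸
    Ideal.mul_mem_mul (X_sub_C_mem_ker_eval x a) (X_sub_C_mem_ker_eval x b)

theorem pderiv_mem_ker_eval_of_mem_sq {p : MvPolynomial σ S}
    (hp : p ∈ RingHom.ker (eval x) ^ 2) (i : σ) : pderiv i p ∈ RingHom.ker (eval x) := by
  rw [pow_two] at hp
  refine Submodule.mul_induction_on hp (fun q hq r hr => ?_) (fun p₁ p₂ h₁ h₂ => ?_)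
  · rw [Derivation.leibniz]
    exact add_mem (Ideal.mul_mem_right _ _ hq) (Ideal.mul_mem_right _ _ hr)
  · rw [map_add]
    exact add_mem h₁ h₂

theorem eval_pderiv_pderiv_of_mem_cube {p : MvPolynomial σ S}
    (hp : p ∈ RingHom.ker (eval x) ^ 3) (a b : σ) : eval x (pderiv a (pderiv b p)) = 0 := by
  rw [pow_succ] at hp
  refine Submodule.mul_induction_on hp (fun q hq r hr => ?_) (fun p₁ p₂ h₁ h₂ => ?_)
  · have hq₀ := Ideal.pow_le_self two_ne_zero hq
    have hqa := pderiv_mem_ker_eval_of_mem_sq x hq a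
    have hqb := pderiv_mem_ker_eval_of_mem_sq x hq b
    rw [RingHom.mem_ker] at hr hq₀ hqa hqb
    simp [Derivation.leibniz, hr, hq₀, hqa, hqb]
  · simp only [map_add, h₁, h₂, add_zero]

variable [Fintype σ]

noncomputable def centeredQuadForm (c : σ → σ → S) : MvPolynomial σ S :=
  ∑ a, ∑ b, C (c a b) * ((X a - C (x a)) * (X b - C (x b)))

theorem centeredQuadForm_add (c d : σ → σ → S) :
    centeredQuadForm x (c + d) = centeredQuadForm x c + centeredQuadForm x d := by
  simp only [centeredQuadForm, Pi.add_apply, map_add, add_mul, sum_add_distrib]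

theorem centeredQuadForm_mem_sq (c : σ → σ → S) :
    centeredQuadForm x c ∈ RingHom.ker (eval x) ^ 2 :=
  Ideal.sum_mem _ fun a _ => Ideal.sum_mem _ fun b _ =>
    Ideal.mul_mem_left _ _ (X_sub_C_mul_X_sub_C_mem_sq x a b)

theorem exists_sub_centeredQuadForm_mem_cube {p : MvPolynomial σ S}
    (hp : p ∈ RingHom.ker (eval x) ^ 2) :
    ∃ c, p - centeredQuadForm x c ∈ RingHom.ker (eval x) ^ 3 := by
  rw [pow_two] at hp
  refine Submodule.mul_induction_on hp (fun q hq r hr => ?_) (fun p₁ p₂ h₁ h₂ => ?_)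
  · rw [ker_eval_eq_span, Ideal.mem_span_range_iff_exists_fun] at hq hr
    obtain ⟨f, rfl⟩ := hq
    obtain ⟨h, rfl⟩ := hr
    refine ⟨fun a b => eval x (f a * h b), ?_⟩
    rw [centeredQuadForm, sum_mul_sum, ← sum_sub_distrib]
    refine Ideal.sum_mem _ fun a _ => ?_
    rw [← sum_sub_distrib]
    refine Ideal.sum_mem _ fun b _ => ?_
    rw [show f a * (X a - C (x a)) * (h b * (X b - C (x b))) -
        C (eval x (f a * h b)) * ((X a - C (x a)) * (X b - C (x b))) =
        ((X a - C (x a)) * (X b - C (x b))) * (f a * h b - C (eval x (f a * h b))) by ring,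
      pow_succ]
    exact Ideal.mul_mem_mul (X_sub_C_mul_X_sub_C_mem_sq x a b) (by simp)
  · obtain ⟨c₁, hc₁⟩ := h₁
    obtain ⟨c₂, hc₂⟩ := h₂
    refine ⟨c₁ + c₂, ?_⟩
    rw [centeredQuadForm_add, add_sub_add_comm]
    exact add_mem hc₁ hc₂

variable [DecidableEq σ]

theorem eval_pderiv_pderiv_centeredQuadForm (c : σ → σ → S) (a b : σ) :
    eval x (pderiv a (pderiv b (centeredQuadForm x c))) = c a b + c b a := by
  simp [centeredQuadForm, Derivation.leibniz, Pi.single_apply, mul_add, sum_add_distrib, add_comm]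

theorem eval_pderiv_pderiv_of_sub_mem_cube {p : MvPolynomial σ S} {c : σ → σ → S}
    (hpc : p - centeredQuadForm x c ∈ RingHom.ker (eval x) ^ 3) (a b : σ) :
    eval x (pderiv a (pderiv b p)) = c a b + c b a := by
  rw [← sub_add_cancel p (centeredQuadForm x c), map_add, map_add, map_add,
    eval_pderiv_pderiv_of_mem_cube x hpc, eval_pderiv_pderiv_centeredQuadForm, zero_add]

end CenteredPolynomials

theorem isSOS_sq {A : Type*} [CommRing A] (q : A) : IsSOS (q ^ 2) :=
  ⟨1, fun _ => q, by simp⟩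

@[simp]
theorem RealClosedExt.coe_toOfin {R : Type} [Field R] [LinearOrder R] [IsStrictOrderedRing R]
    (e : RealClosedExt R) (r : ℝ) : (e.toOfin r : R) = e.ι r := rfl

section FunctionalOnSquare

variable {R : Type} [Field R] [LinearOrder R] [IsStrictOrderedRing R] (e : RealClosedExt R)
  {σ : Type*} {I : Ideal (MvPolynomial σ (Ofin R))} {φ : MvPolynomial σ (Ofin R) → ℝ}
  (hadd : ∀ p ∈ I ^ 2, ∀ q ∈ I ^ 2, φ (p + q) = φ p + φ q)
  (hsmul : ∀ r : ℝ, ∀ p ∈ I ^ 2, φ (C (e.toOfin r) * p) = r * φ p)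
  (hpos : ∀ p ∈ I ^ 2, IsSOS p → 0 ≤ φ p)

include e hpos in
theorem phi_C_mul_sq_nonneg {c : Ofin R} (hc : 0 ≤ (c : R)) {q : MvPolynomial σ (Ofin R)}
    (hq : q ∈ I) : 0 ≤ φ (C c * q ^ 2) := by
  obtain ⟨b, rfl⟩ := e.exists_mul_self_eq c hc
  rw [show C (b * b) * q ^ 2 = (C b * q) ^ 2 by rw [map_mul]; ring]
  exact hpos _ (Ideal.pow_mem_pow (Ideal.mul_mem_left _ _ hq) 2) (isSOS_sq _)

include hadd hsmul hpos in
/-- Positivity on `C (1/N ± ε) * q²` gives `|φ (C ε * q²)| ≤ φ (q²) / N` for every `N`. -/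
theorem phi_C_mul_sq_eq_zero {ε : Ofin R} (hε : Infinitesimal (ε : R))
    {q : MvPolynomial σ (Ofin R)} (hq : q ∈ I) : φ (C ε * q ^ 2) = 0 := by
  have hq2 : q ^ 2 ∈ I ^ 2 := Ideal.pow_mem_pow hq 2
  have hmem : ∀ c : Ofin R, C c * q ^ 2 ∈ I ^ 2 := fun c => Ideal.mul_mem_left _ _ hq2
  refine eq_zero_of_forall_abs_le_div_nat (K := φ (q ^ 2)) fun N hN => ?_
  have hδ : e.ι (N : ℝ)⁻¹ = (N : R)⁻¹ := by rw [map_inv₀, map_natCast]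
  obtain ⟨hε₁, hε₂⟩ := abs_le.mp (hε N hN)
  have h₁ := phi_C_mul_sq_nonneg e hpos (c := e.toOfin (N : ℝ)⁻¹ - ε)
    (show 0 ≤ e.ι (N : ℝ)⁻¹ - ε by linarith) hq
  have h₂ := phi_C_mul_sq_nonneg e hpos (c := e.toOfin (N : ℝ)⁻¹ + ε)
    (show 0 ≤ e.ι (N : ℝ)⁻¹ + ε by linarith) hq
  rw [map_sub, sub_mul, map_sub_of_additiveOn hadd (hmem _) (hmem _), hsmul _ _ hq2] at h₁
  rw [map_add, add_mul, hadd _ (hmem _) _ (hmem _), hsmul _ _ hq2] at h₂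
  rw [abs_le, div_eq_inv_mul]
  constructor <;> linarith

include hadd hsmul hpos in
/-- By polarization `2 q r = q² + r² - (q - r)²` this reduces to `phi_C_mul_sq_eq_zero`. -/
theorem phi_C_mul_eq_zero {ε : Ofin R} (hε : Infinitesimal (ε : R))
    {y : MvPolynomial σ (Ofin R)} (hy : y ∈ I ^ 2) : φ (C ε * y) = 0 := by
  rw [pow_two] at hy
  induction hy using Submodule.mul_induction_on' with
  | mem_mul_mem q hq r hr =>
    have hsq : ∀ s ∈ I, C ε * s ^ 2 ∈ I ^ 2 := fun s hs =>
      Ideal.mul_mem_left _ _ (Ideal.pow_mem_pow hs 2)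
    have hqr : C ε * (q * r) ∈ I ^ 2 :=
      Ideal.mul_mem_left _ _ (pow_two I ▸ Ideal.mul_mem_mul hq hr)
    have htwice : φ (C ε * (q * r)) + φ (C ε * (q * r)) = 0 := by
      rw [← hadd _ hqr _ hqr, show C ε * (q * r) + C ε * (q * r) =
          C ε * q ^ 2 + C ε * r ^ 2 - C ε * (q - r) ^ 2 by ring,
        map_sub_of_additiveOn hadd (add_mem (hsq q hq) (hsq r hr)) (hsq _ (sub_mem hq hr)),
        hadd _ (hsq q hq) _ (hsq r hr), phi_C_mul_sq_eq_zero e hadd hsmul hpos hε hq,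
        phi_C_mul_sq_eq_zero e hadd hsmul hpos hε hr,
        phi_C_mul_sq_eq_zero e hadd hsmul hpos hε (sub_mem hq hr), add_zero, sub_zero]
    linarith
  | add y₁ hy₁ y₂ hy₂ h₁ h₂ =>
    rw [mul_add, hadd _ (Ideal.mul_mem_left _ _ (pow_two I ▸ hy₁))
      _ (Ideal.mul_mem_left _ _ (pow_two I ▸ hy₂)), h₁, h₂, add_zero]

include hadd hsmul hpos in
theorem phi_C_mul_eq_st_mul {st : R → ℝ} (hst : IsStandardPart e st) (c : Ofin R)
    {y : MvPolynomial σ (Ofin R)} (hy : y ∈ I ^ 2) : φ (C c * y) = st c * φ y := by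
  rw [show C c * y = C (e.toOfin (st c)) * y + C (c - e.toOfin (st c)) * y by
      rw [map_sub]; ring,
    hadd _ (Ideal.mul_mem_left _ _ hy) _ (Ideal.mul_mem_left _ _ hy), hsmul _ _ hy,
    phi_C_mul_eq_zero e hadd hsmul hpos (hst c c.2) hy, add_zero]

end FunctionalOnSquare

open scoped Matrix in
theorem Matrix.PosSemidef.exists_eq_transpose_mul_self {ι : Type*} [Fintype ι]
    {A : Matrix ι ι ℝ} (hA : A.PosSemidef) : ∃ B : Matrix ι ι ℝ, A = Bᵀ * B := by
  classical
  open scoped MatrixOrder in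
  obtain ⟨B, rfl⟩ := CStarAlgebra.nonneg_iff_eq_star_mul_self.mp hA.nonneg
  exact ⟨B, by rw [Matrix.star_eq_conjTranspose, Matrix.conjTranspose_eq_transpose_of_trivial]⟩

open scoped Matrix in
theorem Matrix.trace_transpose_mul_self {ι : Type*} [Fintype ι] (B : Matrix ι ι ℝ) :
    (Bᵀ * B).trace = ∑ i, ∑ j, B i j ^ 2 := by
  simp only [Matrix.trace, Matrix.diag, Matrix.mul_apply, Matrix.transpose_apply, pow_two]
  exact sum_comm

section MomentMatrix

variable {S σ : Type*} [CommRing S]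

noncomputable def momentMatrix (φ : MvPolynomial σ S → ℝ) (x : σ → S) : Matrix σ σ ℝ :=
  Matrix.of fun a b => φ ((X a - C (x a)) * (X b - C (x b)))

theorem momentMatrix_comm (φ : MvPolynomial σ S → ℝ) (x : σ → S) (a b : σ) :
    momentMatrix φ x a b = momentMatrix φ x b a := by
  simp only [momentMatrix, Matrix.of_apply, mul_comm]

variable [Fintype σ] {x : σ → S} {φ : MvPolynomial σ S → ℝ}
  (hadd : ∀ p ∈ RingHom.ker (eval x) ^ 2, ∀ q ∈ RingHom.ker (eval x) ^ 2,
    φ (p + q) = φ p + φ q)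
include hadd

theorem trace_momentMatrix : (momentMatrix φ x).trace = φ (∑ i, (X i - C (x i)) ^ 2) := by
  simp only [pow_two]
  rw [map_sum_of_additiveOn hadd _ fun i _ => X_sub_C_mul_X_sub_C_mem_sq x i i]
  rfl

theorem phi_centeredQuadForm (c : σ → σ → S) :
    φ (centeredQuadForm x c) =
      ∑ a, ∑ b, φ (C (c a b) * ((X a - C (x a)) * (X b - C (x b)))) := by
  have hmem a b := Ideal.mul_mem_left _ (C (c a b)) (X_sub_C_mul_X_sub_C_mem_sq x a b)
  rw [centeredQuadForm,
    map_sum_of_additiveOn hadd _ fun a _ => Ideal.sum_mem _ fun b _ => hmem a b]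
  exact sum_congr rfl fun a _ => map_sum_of_additiveOn hadd _ fun b _ => hmem a b

end MomentMatrix

section AtPoint

variable {R : Type} [Field R] [LinearOrder R] [IsStrictOrderedRing R] (e : RealClosedExt R)
  {σ : Type*} [Fintype σ] {x : σ → Ofin R} {φ : MvPolynomial σ (Ofin R) → ℝ}
  (hadd : ∀ p ∈ RingHom.ker (eval x) ^ 2, ∀ q ∈ RingHom.ker (eval x) ^ 2,
    φ (p + q) = φ p + φ q)
  (hsmul : ∀ r : ℝ, ∀ p ∈ RingHom.ker (eval x) ^ 2, φ (C (e.toOfin r) * p) = r * φ p)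
  (hpos : ∀ p ∈ RingHom.ker (eval x) ^ 2, IsSOS p → 0 ≤ φ p)
include hadd hsmul hpos

theorem momentMatrix_posSemidef : (momentMatrix φ x).PosSemidef := by
  refine .of_dotProduct_mulVec_nonneg (Matrix.IsHermitian.ext fun a b => ?_) fun w => ?_
  · exact momentMatrix_comm φ x b a
  have hQ : (∑ a, C (e.toOfin (w a)) * (X a - C (x a))) ^ 2 =
      centeredQuadForm x fun a b => e.toOfin (w a * w b) := by
    simp only [centeredQuadForm, pow_two, sum_mul_sum, map_mul]
    exact sum_congr rfl fun a _ => sum_congr rfl fun b _ => by ring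
  have h := hpos _ (hQ ▸ centeredQuadForm_mem_sq x _) (isSOS_sq _)
  rw [hQ, phi_centeredQuadForm hadd] at h
  simp only [hsmul _ _ (X_sub_C_mul_X_sub_C_mem_sq x _ _)] at h
  refine h.trans_eq ?_
  simp only [dotProduct, Matrix.mulVec, star_trivial, mul_sum, momentMatrix, Matrix.of_apply]
  exact sum_congr rfl fun a _ => sum_congr rfl fun b _ => by ring

theorem phi_eq_half_sum_hessian [DecidableEq σ] {st : R → ℝ} (hst : IsStandardPart e st)
    (hcube : ∀ p ∈ RingHom.ker (eval x) ^ 3, φ p = 0) {p : MvPolynomial σ (Ofin R)}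
    (hp : p ∈ RingHom.ker (eval x) ^ 2) :
    φ p = 1 / 2 * ∑ a, ∑ b, st (eval x (pderiv a (pderiv b p))) * momentMatrix φ x a b := by
  obtain ⟨c, hc⟩ := exists_sub_centeredQuadForm_mem_cube x hp
  have hst_add : ∀ a b : Ofin R, st ↑(a + b) = st a + st b := map_add hst.toRingHom
  have hφp : φ p = ∑ a, ∑ b, st (c a b) * momentMatrix φ x a b := by
    rw [← sub_add_cancel p (centeredQuadForm x c),
      hadd _ (Ideal.pow_le_pow_right (by norm_num) hc) _ (centeredQuadForm_mem_sq x c),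
      hcube _ hc, zero_add, phi_centeredQuadForm hadd]
    exact sum_congr rfl fun a _ => sum_congr rfl fun b _ =>
      phi_C_mul_eq_st_mul e hadd hsmul hpos hst _ (X_sub_C_mul_X_sub_C_mem_sq x a b)
  have hswap : ∑ a, ∑ b, st (c b a) * momentMatrix φ x a b =
      ∑ a, ∑ b, st (c a b) * momentMatrix φ x a b := by
    rw [sum_comm]
    exact sum_congr rfl fun a _ => sum_congr rfl fun b _ => by rw [momentMatrix_comm]
  simp only [eval_pderiv_pderiv_of_sub_mem_cube x hc, hst_add, add_mul, sum_add_distrib, hswap,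
    hφp]
  ring

end AtPoint

theorem st_sum_hessQuadO {R : Type} [Field R] [LinearOrder R] [IsStrictOrderedRing R]
    (e : RealClosedExt R) {st : R → ℝ} (hst : IsStandardPart e st) {n : ℕ}
    (p : MvPolynomial (Fin n) (Ofin R)) (x : Fin n → Ofin R) {ι : Type*} [Fintype ι]
    (v : ι → Fin n → ℝ) :
    st (∑ i, hessQuadO e p x (v i)) =
      ∑ a, ∑ b, st (eval x (pderiv a (pderiv b p))) * ∑ i, v i a * v i b := by
  have hcoe : ∑ i, hessQuadO e p x (v i) = ((∑ i, ∑ a, ∑ b,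
      e.toOfin (v i a) * eval x (pderiv a (pderiv b p)) * e.toOfin (v i b) : Ofin R) : R) := by
    simp [hessQuadO]
  rw [hcoe, ← hst.toRingHom_apply]
  simp only [map_sum, map_mul, hst.toRingHom_toOfin]
  simp only [hst.toRingHom_apply, mul_sum]
  rw [sum_comm]
  exact sum_congr rfl fun a _ => by
    rw [sum_comm]
    exact sum_congr rfl fun b _ => sum_congr rfl fun i _ => by ring

theorem statement_3 {R : Type} [Field R] [LinearOrder R] [IsStrictOrderedRing R] (e : RealClosedExt R)
    (st : R → ℝ) (hst : IsStandardPart e st) {n : ℕ} (x : Fin n → Ofin R)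
    (φ : MvPolynomial (Fin n) (Ofin R) → ℝ)
    (hadd : ∀ p ∈ (idealAt x) ^ 2, ∀ q ∈ (idealAt x) ^ 2, φ (p + q) = φ p + φ q)
    (hsmul : ∀ r : ℝ, ∀ p ∈ (idealAt x) ^ 2, φ (C (e.toOfin r) * p) = r * φ p)
    (hpos : ∀ p ∈ (idealAt x) ^ 2, IsSOS p → 0 ≤ φ p)
    (hu : φ (uPolyO x) = 1)
    (hcube : ∀ p ∈ (idealAt x) ^ 3, φ p = 0) :
    ∃ v : Fin n → Fin n → ℝ, (∑ i, ∑ j, v i j ^ 2) = 1 ∧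
      ∀ p ∈ (idealAt x) ^ 2, φ p = (1 / 2) * st (∑ i, hessQuadO e p x (v i)) := by
  simp only [idealAt, ← ker_eval_eq_span] at hadd hsmul hpos hcube ⊢
  obtain ⟨B, hB⟩ := (momentMatrix_posSemidef e hadd hsmul hpos).exists_eq_transpose_mul_self
  refine ⟨B, ?_, fun p hp => ?_⟩
  · rw [← Matrix.trace_transpose_mul_self, ← hB, trace_momentMatrix hadd, ← hu, uPolyO]
  · rw [phi_eq_half_sum_hessian e hadd hsmul hpos hst hcube hp,
      st_sum_hessQuadO e hst p x (v := B), hB]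
    simp [Matrix.mul_apply]
end

section
/- Let R be a real closed extension field of ℝ and let Φ : 𝒪_R[X₁,…,Xₙ] → ℝ be a ring homomorphism. Then there exists x ∈ ℝⁿ such that Φ(p) = st(p(x)) for all p ∈ 𝒪_R[X₁,…,Xₙ]. -/
open MvPolynomial Finset

/-!
`Φ` is determined by the real point `x i := Φ (X i)` together with its restriction `φ` to the
constants `𝒪_R`. Since nonnegative elements of `R` are squares, and square roots of finite
elements are finite, `φ` is monotone; it fixes `ℝ` (the only ring endomorphism of `ℝ` is the
identity) and hence kills infinitesimals, so `φ = st` on `𝒪_R`.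
-/

namespace Ofin

variable {R : Type} [Field R] [LinearOrder R] [IsStrictOrderedRing R]

lemma mem_of_sq_mem {b : R} (hb : b ^ 2 ∈ Ofin R) : b ∈ Ofin R := by
  obtain ⟨N, hN⟩ := hb
  refine ⟨N + 1, ?_⟩
  push_cast
  by_contra! h
  rw [abs_of_nonneg (sq_nonneg b)] at hN
  nlinarith [sq_abs b, abs_nonneg b, (Nat.cast_nonneg N : (0 : R) ≤ N)]

lemma exists_sq_eq_of_nonneg (e : RealClosedExt R) {a : Ofin R} (ha : 0 ≤ (a : R)) :
    ∃ b : Ofin R, b ^ 2 = a := by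
  obtain ⟨b, hb⟩ := e.sq a ha
  exact ⟨⟨b, mem_of_sq_mem (hb ▸ a.2)⟩, Subtype.ext hb⟩

lemma map_nonneg (e : RealClosedExt R) (φ : Ofin R →+* ℝ) {a : Ofin R} (ha : 0 ≤ (a : R)) :
    0 ≤ φ a := by
  obtain ⟨b, rfl⟩ := exists_sq_eq_of_nonneg e ha
  rw [map_pow]
  positivity

lemma map_toOfin (e : RealClosedExt R) (φ : Ofin R →+* ℝ) (r : ℝ) : φ (e.toOfin r) = r :=
  RingHom.congr_fun (Subsingleton.elim (φ.comp e.toOfin) (RingHom.id ℝ)) r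

lemma natCast_mul_abs_map_le_one (e : RealClosedExt R) (φ : Ofin R →+* ℝ) {a : Ofin R} {N : ℕ}
    (ha : (N : R) * |(a : R)| ≤ 1) : (N : ℝ) * |φ a| ≤ 1 := by
  have hle : |(N : R) * a| ≤ 1 := by rwa [abs_mul, Nat.abs_cast]
  rw [abs_le] at hle
  have hplus : 0 ≤ φ (1 + N * a) := map_nonneg e φ (by push_cast; linarith)
  have hminus : 0 ≤ φ (1 - N * a) := map_nonneg e φ (by push_cast; linarith)
  simp only [map_add, map_sub, map_mul, map_one, map_natCast] at hplus hminus
  rw [← Nat.abs_cast N, ← abs_mul, abs_le]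
  constructor <;> linarith

lemma map_eq_zero_of_infinitesimal (e : RealClosedExt R) (φ : Ofin R →+* ℝ) {a : Ofin R}
    (ha : Infinitesimal (a : R)) : φ a = 0 := by
  by_contra hne
  obtain ⟨N, hN⟩ := exists_nat_gt (|φ a|⁻¹)
  have hpos : 0 < |φ a| := abs_pos.mpr hne
  have hNpos : 0 < N := by exact_mod_cast (inv_pos.mpr hpos).trans hN
  have hNR : (0 : R) < N := Nat.cast_pos.mpr hNpos
  have hsmall : (N : R) * |(a : R)| ≤ 1 := by
    calc (N : R) * |(a : R)| ≤ N * (N : R)⁻¹ := by gcongr; exact ha N hNpos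
      _ = 1 := mul_inv_cancel₀ hNR.ne'
  have := natCast_mul_abs_map_le_one e φ hsmall
  rw [inv_lt_iff_one_lt_mul₀ hpos] at hN
  linarith

lemma map_eq_standardPart (e : RealClosedExt R) {st : R → ℝ} (hst : IsStandardPart e st)
    (φ : Ofin R →+* ℝ) (a : Ofin R) : φ a = st a := by
  have h := map_eq_zero_of_infinitesimal e φ (a := a - e.toOfin (st a)) (hst a a.2)
  rwa [map_sub, map_toOfin, sub_eq_zero] at h

end Ofin

lemma evalR_comp_subtype {R : Type} [Field R] [LinearOrder R] [IsStrictOrderedRing R] {n : ℕ}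
    (y : Fin n → Ofin R) (p : MvPolynomial (Fin n) (Ofin R)) :
    evalR (fun i => (y i : R)) p = eval y p :=
  (eval₂_comp_left (Ofin R).subtype (RingHom.id _) y p).symm

theorem statement_4 {R : Type} [Field R] [LinearOrder R] [IsStrictOrderedRing R] (e : RealClosedExt R)
    (st : R → ℝ) (hst : IsStandardPart e st) {n : ℕ}
    (Φ : MvPolynomial (Fin n) (Ofin R) →+* ℝ) :
    ∃ x : Fin n → ℝ, ∀ p : MvPolynomial (Fin n) (Ofin R),
      Φ p = st (evalR (fun i => e.ι (x i)) p) := by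
  let x : Fin n → ℝ := fun i => Φ (X i)
  let φ : Ofin R →+* ℝ := Φ.comp C
  have hΦ : Φ = φ.comp (eval fun i => e.toOfin (x i)) := by
    refine ringHom_ext (fun a => by simp [φ]) fun i => ?_
    simp only [RingHom.comp_apply, eval_X]
    exact (Ofin.map_toOfin e φ (x i)).symm
  refine ⟨x, fun p => ?_⟩
  rw [hΦ, RingHom.comp_apply, Ofin.map_eq_standardPart e hst]
  exact congrArg st (evalR_comp_subtype _ p).symm
end

section
/- Let S ⊆ ℝⁿ be compact, let x₁,…,x_k ∈ ℝⁿ be pairwise distinct points in the interior of S, set u := u_{x₁}⋯u_{x_k} ∈ ℝ[X₁,…,Xₙ], and let f ∈ ℝ[X₁,…,Xₙ] satisfy f(x₁) = … = f(x_k) = 0. Then the following are equivalent: (a) f(x) > 0 for all x ∈ S∖{x₁,…,x_k} and the Hessian matrices (Hess f)(x₁),…,(Hess f)(x_k) are positive definite; (b) there exists ε > 0 such that f(x) ≥ ε·u(x) for all x ∈ S. -/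
open MvPolynomial Finset

/-!
Along a line, `t ↦ p (x + t • v)` is a polynomial whose coefficients in degrees `0, 1, 2` are
`p x`, `(∇ p)(x)ᵀ v` and `vᵀ (Hess p)(x) v / 2`. At a local minimum the degree-1 coefficient
vanishes and the degree-2 one is nonnegative; applied to `f - ε u` at `xᵢ`, where `Hess u` is a
positive multiple of the identity, this gives (b) ⇒ (a). Conversely, when the gradient vanishes,
`p (x + t • v) = t² H(t, v)` with `H` continuous and `H(0, v) = vᵀ (Hess p)(x) v / 2`. The tube
lemma over the unit sphere makes `H` uniformly positive for small `t`, so `f ≥ c · u_{xᵢ}` near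
`xᵢ`; away from the `xᵢ` positivity of `f` gives `f ≥ ε u` locally, and compactness of `S` makes
`ε` uniform.
-/

open Filter Topology

section LineExpansion

variable {σ R : Type*} [CommRing R]

/-- `p (x + T • V)` as a polynomial in `T` whose coefficients are polynomials in `V`. -/
noncomputable def lineExpansion (x : σ → R) :
    MvPolynomial σ R →ₐ[R] Polynomial (MvPolynomial σ R) :=
  aeval fun i => Polynomial.C (C (x i)) + Polynomial.C (X i) * Polynomial.X

theorem eval_map_lineExpansion (x v : σ → R) (t : R) (p : MvPolynomial σ R) :
    ((lineExpansion x p).map (eval v)).eval t = eval (x + t • v) p := by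
  induction p using MvPolynomial.induction_on with
  | C a => simp [lineExpansion]
  | add p q hp hq => simp [hp, hq]
  | mul_X p i hp =>
    simp only [map_mul, Polynomial.map_mul, Polynomial.eval_mul, hp]
    simp [lineExpansion, mul_comm (v i)]

theorem coeff_zero_lineExpansion (x : σ → R) (p : MvPolynomial σ R) :
    (lineExpansion x p).coeff 0 = C (eval x p) := by
  induction p using MvPolynomial.induction_on with
  | C a => simp [lineExpansion]
  | add p q hp hq => simp [hp, hq]
  | mul_X p i hp => simp [lineExpansion, Polynomial.mul_coeff_zero, ← hp]

theorem derivative_lineExpansion [Fintype σ] [DecidableEq σ] (x : σ → R) (p : MvPolynomial σ R) :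
    Polynomial.derivative (lineExpansion x p)
      = ∑ i, Polynomial.C (X i) * lineExpansion x (pderiv i p) := by
  induction p using MvPolynomial.induction_on with
  | C a => simp [lineExpansion]
  | add p q hp hq => simp [hp, hq, mul_add, Finset.sum_add_distrib]
  | mul_X p j hp =>
    have hX : Polynomial.derivative (lineExpansion x (X j)) = Polynomial.C (X j) := by
      simp [lineExpansion]
    rw [map_mul, Polynomial.derivative_mul, hp, hX, Finset.sum_mul]
    simp only [Derivation.leibniz, pderiv_X, smul_eq_mul, map_add, map_mul, mul_add,
      Finset.sum_add_distrib, Pi.single_apply]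
    simp [mul_comm, mul_left_comm, add_comm]

theorem coeff_one_lineExpansion [Fintype σ] [DecidableEq σ] (x : σ → R) (p : MvPolynomial σ R) :
    (lineExpansion x p).coeff 1 = ∑ i, C (eval x (pderiv i p)) * X i := by
  have h := congrArg (Polynomial.coeff · 0) (derivative_lineExpansion x p)
  simpa [Polynomial.coeff_derivative, Polynomial.finsetSum_coeff, coeff_zero_lineExpansion,
    mul_comm] using h

theorem coeff_two_lineExpansion [Fintype σ] [DecidableEq σ] (x : σ → R) (p : MvPolynomial σ R) :
    (lineExpansion x p).coeff 2 * 2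
      = ∑ a, ∑ b, X a * C (eval x (pderiv a (pderiv b p))) * X b := by
  have h := congrArg (Polynomial.coeff · 1) (derivative_lineExpansion x p)
  simp only [Polynomial.coeff_derivative, Polynomial.finsetSum_coeff, Polynomial.coeff_C_mul,
    coeff_one_lineExpansion, Finset.mul_sum] at h
  norm_num only at h
  rw [h, Finset.sum_comm]
  simp only [mul_comm, mul_left_comm]

end LineExpansion

namespace Polynomial

theorem coeff_one_eq_zero_of_isLocalMin {g : Polynomial ℝ}
    (h : IsLocalMin (fun t => g.eval t) 0) : g.coeff 1 = 0 := by
  simpa [Polynomial.deriv, ← coeff_zero_eq_eval_zero, coeff_derivative] using h.deriv_eq_zero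

theorem coeff_two_nonneg_of_isLocalMin {g : Polynomial ℝ}
    (h : IsLocalMin (fun t => g.eval t) 0) : 0 ≤ g.coeff 2 := by
  obtain ⟨q, hq⟩ : X ^ 2 ∣ g - C (g.coeff 0) := by
    rw [X_pow_dvd_iff]
    intro d hd
    interval_cases d <;> simp [coeff_one_eq_zero_of_isLocalMin h]
  have hq_nonneg : ∀ᶠ t in 𝓝[≠] (0 : ℝ), 0 ≤ q.eval t := by
    filter_upwards [nhdsWithin_le_nhds h, self_mem_nhdsWithin] with t ht ht0
    have := congrArg (eval t) hq
    simp only [eval_sub, eval_C, eval_mul, eval_pow, eval_X, ← coeff_zero_eq_eval_zero] at this ht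
    have ht2 : 0 < t ^ 2 := by have : t ≠ 0 := ht0; positivity
    nlinarith
  have hq0 : g.coeff 2 = q.eval 0 := by
    simpa [coeff_X_pow_mul', coeff_zero_eq_eval_zero] using congrArg (coeff · 2) hq
  rw [hq0]
  exact ge_of_tendsto (q.continuous.tendsto 0 |>.mono_left nhdsWithin_le_nhds) hq_nonneg

end Polynomial

theorem continuous_eval_map_eval {σ : Type*} (Q : Polynomial (MvPolynomial σ ℝ)) :
    Continuous fun z : ℝ × (σ → ℝ) => (Q.map (eval z.2)).eval z.1 := by
  simp only [Polynomial.eval_map, Polynomial.eval₂_eq_sum_range]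
  exact continuous_finsetSum _ fun d _ =>
    ((continuous_eval _).comp continuous_snd).mul (continuous_fst.pow d)

theorem exists_pos_mul_mul_le_of_eventually {Y : Type*} [TopologicalSpace Y] {f a b : Y → ℝ}
    {y : Y} {c : ℝ} (hc : 0 < c) (hfa : ∀ᶠ z in 𝓝 y, c * a z ≤ f z) (ha : ∀ z, 0 ≤ a z)
    (hb : ContinuousAt b y) (hb0 : ∀ z, 0 ≤ b z) :
    ∃ ε > 0, ∀ᶠ z in 𝓝 y, ε * (a z * b z) ≤ f z := by
  have hB : 0 < b y + 1 := by linarith [hb0 y]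
  refine ⟨c / (b y + 1), by positivity, ?_⟩
  filter_upwards [hfa, hb.eventually (gt_mem_nhds (lt_add_one (b y)))] with z hfz hbz
  calc c / (b y + 1) * (a z * b z) ≤ c / (b y + 1) * (a z * (b y + 1)) := by
        gcongr
        exact ha z
    _ = c * a z := by field_simp
    _ ≤ f z := hfz

theorem IsCompact.exists_pos_mul_le {Y : Type*} [TopologicalSpace Y] {S : Set Y}
    (hS : IsCompact S) {f g : Y → ℝ} (hg : ∀ z, 0 ≤ g z)
    (hloc : ∀ y ∈ S, ∃ ε > 0, ∀ᶠ z in 𝓝 y, ε * g z ≤ f z) :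
    ∃ ε > 0, ∀ z ∈ S, ε * g z ≤ f z := by
  refine hS.induction_on (p := fun s => ∃ ε > 0, ∀ z ∈ s, ε * g z ≤ f z)
    ⟨1, one_pos, by simp⟩ (fun s t hst ⟨ε, hε, h⟩ => ⟨ε, hε, fun z hz => h z (hst hz)⟩) ?_ ?_
  · rintro s t ⟨ε₁, hε₁, h₁⟩ ⟨ε₂, hε₂, h₂⟩
    refine ⟨min ε₁ ε₂, lt_min hε₁ hε₂, ?_⟩
    rintro z (hz | hz)
    · exact (mul_le_mul_of_nonneg_right (min_le_left _ _) (hg z)).trans (h₁ z hz)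
    · exact (mul_le_mul_of_nonneg_right (min_le_right _ _) (hg z)).trans (h₂ z hz)
  · intro y hy
    obtain ⟨ε, hε, h⟩ := hloc y hy
    exact ⟨_, mem_nhdsWithin_of_mem_nhds h, ε, hε, fun z hz => hz⟩

section Real

variable {n : ℕ}

theorem eval_coeff_one_lineExpansion (x v : Fin n → ℝ) (p : MvPolynomial (Fin n) ℝ) :
    eval v ((lineExpansion x p).coeff 1) = gradDot p x v := by
  simp [coeff_one_lineExpansion, gradDot]

theorem eval_coeff_two_lineExpansion (x v : Fin n → ℝ) (p : MvPolynomial (Fin n) ℝ) :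
    eval v ((lineExpansion x p).coeff 2) = hessQuad p x v / 2 := by
  have h := congrArg (eval v) (coeff_two_lineExpansion x p)
  simp only [map_mul, map_sum, eval_X, eval_C, map_ofNat] at h
  rw [hessQuad, ← h]
  ring

theorem hessQuad_eq_two_mul_eval_coeff_two (p : MvPolynomial (Fin n) ℝ) (x v : Fin n → ℝ) :
    hessQuad p x v = 2 * eval v ((lineExpansion x p).coeff 2) := by
  rw [eval_coeff_two_lineExpansion]
  ring

theorem isLocalMin_eval_map_lineExpansion {p : MvPolynomial (Fin n) ℝ} {x : Fin n → ℝ}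
    (h : IsLocalMin (fun y => eval y p) x) (v : Fin n → ℝ) :
    IsLocalMin (fun t => ((lineExpansion x p).map (eval v)).eval t) 0 := by
  have hline : ContinuousAt (fun t : ℝ => x + t • v) 0 := by fun_prop
  simpa [Function.comp_def, eval_map_lineExpansion] using
    IsLocalMin.comp_continuous (g := fun t : ℝ => x + t • v) (by simpa using h) hline

theorem IsLocalMin.gradDot_eq_zero {p : MvPolynomial (Fin n) ℝ} {x : Fin n → ℝ}
    (h : IsLocalMin (fun y => eval y p) x) (v : Fin n → ℝ) : gradDot p x v = 0 := by
  rw [← eval_coeff_one_lineExpansion, ← Polynomial.coeff_map]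
  exact Polynomial.coeff_one_eq_zero_of_isLocalMin (isLocalMin_eval_map_lineExpansion h v)

theorem IsLocalMin.hessQuad_nonneg {p : MvPolynomial (Fin n) ℝ} {x : Fin n → ℝ}
    (h : IsLocalMin (fun y => eval y p) x) (v : Fin n → ℝ) : 0 ≤ hessQuad p x v := by
  have := Polynomial.coeff_two_nonneg_of_isLocalMin (isLocalMin_eval_map_lineExpansion h v)
  rw [Polynomial.coeff_map, eval_coeff_two_lineExpansion] at this
  linarith

theorem eval_uPoly (x y : Fin n → ℝ) : eval y (uPoly x) = ∑ i, (y i - x i) ^ 2 := by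
  simp [uPoly]

theorem eval_uPoly_self (x : Fin n → ℝ) : eval x (uPoly x) = 0 := by
  simp [eval_uPoly]

theorem eval_uPoly_nonneg (x y : Fin n → ℝ) : 0 ≤ eval y (uPoly x) := by
  rw [eval_uPoly]
  positivity

theorem eval_uPoly_pos {x y : Fin n → ℝ} (h : y ≠ x) : 0 < eval y (uPoly x) := by
  obtain ⟨i, hi⟩ := Function.ne_iff.mp h
  rw [eval_uPoly]
  have : y i - x i ≠ 0 := sub_ne_zero.mpr hi
  exact Finset.sum_pos' (fun j _ => sq_nonneg _) ⟨i, Finset.mem_univ i, by positivity⟩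

theorem exists_continuous_eval_line_eq_sq_mul {p : MvPolynomial (Fin n) ℝ} {x : Fin n → ℝ}
    (h0 : eval x p = 0) (hgrad : ∀ v, gradDot p x v = 0) :
    ∃ H : ℝ × (Fin n → ℝ) → ℝ, Continuous H ∧
      (∀ t v, eval (x + t • v) p = t ^ 2 * H (t, v)) ∧ ∀ v, H (0, v) = hessQuad p x v / 2 := by
  obtain ⟨Q, hQ⟩ : Polynomial.X ^ 2 ∣ lineExpansion x p := by
    rw [Polynomial.X_pow_dvd_iff]
    intro d hd
    interval_cases d
    · simp [coeff_zero_lineExpansion, h0]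
    · exact MvPolynomial.funext fun v => by simp [eval_coeff_one_lineExpansion, hgrad]
  refine ⟨fun z => (Q.map (eval z.2)).eval z.1, continuous_eval_map_eval Q, fun t v => ?_,
    fun v => ?_⟩
  · simp [← eval_map_lineExpansion, hQ]
  · have := congrArg (fun L => eval v (Polynomial.coeff L 2)) hQ
    simp only [eval_coeff_two_lineExpansion, Polynomial.coeff_X_pow_mul'] at this
    simp [this, Polynomial.coeff_zero_eq_eval_zero]

theorem exists_pos_mul_eval_uPoly_le {p : MvPolynomial (Fin n) ℝ} {x : Fin n → ℝ}
    (h0 : eval x p = 0) (hgrad : ∀ v, gradDot p x v = 0)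
    (hhess : ∀ v, v ≠ 0 → 0 < hessQuad p x v) :
    ∃ c > 0, ∀ᶠ y in 𝓝 x, c * eval y (uPoly x) ≤ eval y p := by
  obtain ⟨H, hHc, hH, hH0⟩ := exists_continuous_eval_line_eq_sq_mul h0 hgrad
  set K := WithLp.ofLp '' Metric.sphere (0 : EuclideanSpace ℝ (Fin n)) 1
  have hK : IsCompact K := (isCompact_sphere 0 1).image (PiLp.continuous_ofLp 2 _)
  have hpos : ∀ v ∈ K, 0 < H (0, v) := by
    rintro _ ⟨w, hw, rfl⟩
    rw [hH0]
    exact half_pos (hhess _ (by simpa using ne_zero_of_mem_unit_sphere ⟨w, hw⟩))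
  obtain ⟨m, hm, hmK⟩ : ∃ m, 0 < m ∧ ∀ v ∈ K, m ≤ H (0, v) :=
    hK.exists_forall_le' (hHc.comp (Continuous.prodMk_right 0)).continuousOn hpos
  have htube : ∀ᶠ t in 𝓝 (0 : ℝ), ∀ v ∈ K, m / 2 < H (t, v) :=
    hK.eventually_forall_of_forall_eventually fun v hv =>
      hHc.continuousAt.eventually (lt_mem_nhds (by linarith [hmK v hv]))
  have hnorm : Tendsto (fun y => ‖WithLp.toLp 2 (y - x)‖) (𝓝 x) (𝓝 0) := by
    have : Continuous fun y : Fin n → ℝ => ‖WithLp.toLp 2 (y - x)‖ := by fun_prop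
    simpa using this.tendsto x
  refine ⟨m / 2, by positivity, (hnorm.eventually htube).mono fun y hy => ?_⟩
  set w := WithLp.toLp 2 (y - x)
  have hw2 : ‖w‖ ^ 2 = eval y (uPoly x) := by
    rw [EuclideanSpace.real_norm_sq_eq, eval_uPoly]
    rfl
  by_cases hw : w = 0
  · have : y = x := sub_eq_zero.mp ((WithLp.toLp_eq_zero 2).mp hw)
    simp [this, eval_uPoly_self, h0]
  · have hv : WithLp.ofLp (‖w‖⁻¹ • w) ∈ K :=
      ⟨_, by simp [norm_smul, norm_ne_zero_iff.mpr hw], rfl⟩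
    have hy_eq : y = x + ‖w‖ • WithLp.ofLp (‖w‖⁻¹ • w) := by
      rw [WithLp.ofLp_smul, smul_smul, mul_inv_cancel₀ (norm_ne_zero_iff.mpr hw), one_smul]
      simp [w]
    rw [← hw2, hy_eq, hH]
    nlinarith [hy _ hv, sq_nonneg ‖w‖]

theorem hessQuad_sub_C_mul (f g : MvPolynomial (Fin n) ℝ) (c : ℝ) (x v : Fin n → ℝ) :
    hessQuad (f - C c * g) x v = hessQuad f x v - c * hessQuad g x v := by
  simp only [hessQuad_eq_two_mul_eval_coeff_two, C_mul', map_sub, map_smul, Polynomial.coeff_sub,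
    Polynomial.coeff_smul, smul_eval]
  ring

theorem lineExpansion_uPoly (x : Fin n → ℝ) :
    lineExpansion x (uPoly x) = Polynomial.C (∑ i, X i ^ 2) * Polynomial.X ^ 2 := by
  simp [uPoly, lineExpansion, Finset.sum_mul, mul_pow]

theorem hessQuad_uPoly_mul (x v : Fin n → ℝ) (w : MvPolynomial (Fin n) ℝ) :
    hessQuad (uPoly x * w) x v = 2 * eval x w * ∑ i, v i ^ 2 := by
  rw [hessQuad_eq_two_mul_eval_coeff_two, map_mul, lineExpansion_uPoly, mul_assoc,
    Polynomial.coeff_C_mul, Polynomial.coeff_X_pow_mul']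
  simp only [le_refl, ↓reduceIte, tsub_self, coeff_zero_lineExpansion, map_mul, map_sum, map_pow,
    eval_X, eval_C]
  ring

theorem eval_prod_uPoly_nonneg {ι : Type*} (s : Finset ι) (x : ι → Fin n → ℝ) (y : Fin n → ℝ) :
    0 ≤ eval y (∏ j ∈ s, uPoly (x j)) := by
  rw [map_prod]
  exact Finset.prod_nonneg fun j _ => eval_uPoly_nonneg _ _

theorem hessQuad_pos_of_mul_eval_prod_uPoly_le {k : ℕ} {S : Set (Fin n → ℝ)}
    {x : Fin k → Fin n → ℝ} (hdist : Function.Injective x) {f : MvPolynomial (Fin n) ℝ} {ε : ℝ}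
    (hε : 0 < ε) (hbound : ∀ y ∈ S, ε * eval y (∏ j, uPoly (x j)) ≤ eval y f) {i : Fin k}
    (hS : S ∈ 𝓝 (x i)) (hzero : eval (x i) f = 0) {v : Fin n → ℝ} (hv : v ≠ 0) :
    0 < hessQuad f (x i) v := by
  set W := ∏ j ∈ Finset.univ.erase i, uPoly (x j)
  have hU : ∏ j, uPoly (x j) = uPoly (x i) * W := (Finset.mul_prod_erase _ _ (mem_univ i)).symm
  have hmin : IsLocalMin (fun y => eval y (f - C ε * (uPoly (x i) * W))) (x i) := by
    filter_upwards [hS] with y hy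
    simp only [map_sub, map_mul, eval_C, hzero, eval_uPoly_self, zero_mul, mul_zero, sub_zero]
    have := hbound y hy
    rw [hU, map_mul] at this
    linarith
  have hW : 0 < eval (x i) W := by
    rw [map_prod]
    exact Finset.prod_pos fun j hj => eval_uPoly_pos (hdist.ne (Finset.ne_of_mem_erase hj)).symm
  have hv2 : 0 < ∑ a, v a ^ 2 := by simpa [eval_uPoly] using eval_uPoly_pos hv
  have := hmin.hessQuad_nonneg v
  rw [hessQuad_sub_C_mul, hessQuad_uPoly_mul] at this
  nlinarith [mul_pos (mul_pos hε hW) hv2]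

theorem exists_pos_mul_eval_prod_uPoly_le {k : ℕ} {S : Set (Fin n → ℝ)} (hS : IsCompact S)
    {x : Fin k → Fin n → ℝ} (hnhds : ∀ i, S ∈ 𝓝 (x i)) {f : MvPolynomial (Fin n) ℝ}
    (hzero : ∀ i, eval (x i) f = 0) (hpos : ∀ y ∈ S, (∀ i, y ≠ x i) → 0 < eval y f)
    (hhess : ∀ i, ∀ v, v ≠ 0 → 0 < hessQuad f (x i) v) :
    ∃ ε > 0, ∀ y ∈ S, ε * eval y (∏ i, uPoly (x i)) ≤ eval y f := by
  have hf_nonneg : ∀ y ∈ S, 0 ≤ eval y f := fun y hy => by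
    by_cases h : ∃ i, y = x i
    · obtain ⟨i, rfl⟩ := h
      exact (hzero i).ge
    · exact (hpos y hy (not_exists.mp h)).le
  refine hS.exists_pos_mul_le (fun y => eval_prod_uPoly_nonneg _ _ y) fun y hy => ?_
  by_cases h : ∃ i, y = x i
  · obtain ⟨i, rfl⟩ := h
    have hmin : IsLocalMin (fun y => eval y f) (x i) := by
      filter_upwards [hnhds i] with z hz
      rw [hzero i]
      exact hf_nonneg z hz
    obtain ⟨c, hc, hcf⟩ :=
      exists_pos_mul_eval_uPoly_le (hzero i) hmin.gradDot_eq_zero (hhess i)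
    simpa [← Finset.mul_prod_erase _ _ (mem_univ i)] using
      exists_pos_mul_mul_le_of_eventually hc hcf (eval_uPoly_nonneg _)
        (continuous_eval _).continuousAt (eval_prod_uPoly_nonneg (Finset.univ.erase i) x)
  · have hfy := hpos y hy (not_exists.mp h)
    have hev : ∀ᶠ z in 𝓝 y, eval y f / 2 * 1 ≤ eval z f :=
      (continuous_eval f).continuousAt.eventually (lt_mem_nhds (half_lt_self hfy)) |>.mono
        fun z hz => by linarith
    simpa using exists_pos_mul_mul_le_of_eventually (half_pos hfy) hev (fun _ => zero_le_one)
      (continuous_eval _).continuousAt (eval_prod_uPoly_nonneg _ x)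

end Real

theorem statement_11 {n k : ℕ} (S : Set (Fin n → ℝ)) (hS : IsCompact S)
    (x : Fin k → Fin n → ℝ) (hdist : Function.Injective x)
    (hint : ∀ i, x i ∈ interior S)
    (f : MvPolynomial (Fin n) ℝ) (hzero : ∀ i, eval (x i) f = 0) :
    ((∀ y ∈ S, (∀ i, y ≠ x i) → 0 < eval y f) ∧
      ∀ i : Fin k, ∀ v : Fin n → ℝ, v ≠ 0 → 0 < hessQuad f (x i) v) ↔
    ∃ ε : ℝ, 0 < ε ∧ ∀ y ∈ S, ε * eval y (∏ i, uPoly (x i)) ≤ eval y f := by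
  have hnhds : ∀ i, S ∈ 𝓝 (x i) := fun i => mem_interior_iff_mem_nhds.mp (hint i)
  constructor
  · rintro ⟨hpos, hhess⟩
    exact exists_pos_mul_eval_prod_uPoly_le hS hnhds hzero hpos hhess
  · rintro ⟨ε, hε, hbound⟩
    refine ⟨fun y hy hyx => ?_, fun i v hv =>
      hessQuad_pos_of_mul_eval_prod_uPoly_le hdist hε hbound (hnhds i) (hzero i) hv⟩
    have hU : 0 < eval y (∏ i, uPoly (x i)) := by
      rw [map_prod]
      exact Finset.prod_pos fun j _ => eval_uPoly_pos (hyx j)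
    exact (mul_pos hε hU).trans_le (hbound y hy)
end

section
/- Let u ∈ ℝⁿ, f ∈ ℝ[X₁,…,Xₙ], g = (g₁,…,g_m) ∈ ℝ[X₁,…,Xₙ]^m, and let U be a neighborhood of u in ℝⁿ such that U ∩ S(g) is convex and is not a singleton. Suppose g₁,…,g_m are strictly quasiconcave at u, f(x) ≥ 0 for all x ∈ U ∩ S(g), and f(u) = g₁(u) = … = g_m(u) = 0. Then there exist λ₁,…,λ_m ∈ ℝ≥0 such that ∇f(u) = Σ_{i=1}^m λᵢ ∇gᵢ(u). -/
open MvPolynomial Finset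

/-!
Along the segment from `u` to another point `w` of the convex set `U ∩ S(g)` every `gᵢ` stays
nonnegative. As `gᵢ(u) = 0`, its derivative in the direction `d = w - u` is nonnegative, and
strict quasiconcavity excludes the value zero (the second derivative would be negative), so
`∇gᵢ(u) · d > 0` for all `i`. For any `v` with `∇gᵢ(u) · v ≥ 0` for all `i`, the direction
`v + ε d` then leads into the region where all `gᵢ > 0`, on which `f ≥ 0 = f(u)`; hence
`∇f(u) · (v + ε d) ≥ 0`, and `ε → 0` gives `∇f(u) · v ≥ 0`. By Farkas' lemma `∇f(u)` lies in the
cone generated by the `∇gᵢ(u)`; that this cone is closed also follows from the direction `d`.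
-/

open Filter Topology

section LineRestriction

open Polynomial

namespace MvPolynomial

variable {R σ : Type*} [CommRing R]

noncomputable def lineRestriction (x v : σ → R) : MvPolynomial σ R →ₐ[R] R[X] :=
  aeval fun j => Polynomial.C (x j) + Polynomial.C (v j) * Polynomial.X

theorem eval_lineRestriction (x v : σ → R) (p : MvPolynomial σ R) (t : R) :
    (lineRestriction x v p).eval t = eval (x + t • v) p := by
  induction p using MvPolynomial.induction_on with
  | C a => simp [lineRestriction]
  | add p q hp hq => simp_all
  | mul_X p i hp =>
    rw [map_mul, Polynomial.eval_mul, hp]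
    simp [lineRestriction, mul_comm t]

theorem coeff_zero_lineRestriction (x v : σ → R) (p : MvPolynomial σ R) :
    (lineRestriction x v p).coeff 0 = eval x p := by
  simp [coeff_zero_eq_eval_zero, eval_lineRestriction]

theorem derivative_lineRestriction [Fintype σ] (x v : σ → R) (p : MvPolynomial σ R) :
    derivative (lineRestriction x v p) =
      ∑ j, Polynomial.C (v j) * lineRestriction x v (pderiv j p) := by
  classical
  induction p using MvPolynomial.induction_on with
  | C a => simp [lineRestriction]
  | add p q hp hq => simp [hp, hq, mul_add, sum_add_distrib]
  | mul_X p i hp =>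
    have hX : ∑ j, Polynomial.C (v j) * lineRestriction x v (pderiv j (X i)) =
        derivative (lineRestriction x v (X i)) := by
      rw [Finset.sum_eq_single i (fun j _ hj => by simp [pderiv_X, hj]) (by simp)]
      simp [pderiv_X, lineRestriction]
    simp only [map_mul, derivative_mul, hp, Derivation.leibniz, map_add, smul_eq_mul, mul_add,
      sum_add_distrib, sum_mul, ← hX, mul_sum]
    rw [add_comm]
    exact congrArg₂ (· + ·) (sum_congr rfl fun j _ => by ring) (sum_congr rfl fun j _ => by ring)

theorem coeff_succ_lineRestriction [Fintype σ] (x v : σ → R) (p : MvPolynomial σ R) (k : ℕ) :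
    (lineRestriction x v p).coeff (k + 1) * (k + 1) =
      ∑ j, v j * (lineRestriction x v (pderiv j p)).coeff k := by
  rw [← coeff_derivative, derivative_lineRestriction, finsetSum_coeff]
  simp only [Polynomial.coeff_C_mul]

end MvPolynomial

variable {n : ℕ}

theorem coeff_one_lineRestriction (x v : Fin n → ℝ) (p : MvPolynomial (Fin n) ℝ) :
    (lineRestriction x v p).coeff 1 = gradDot p x v := by
  simpa [coeff_zero_lineRestriction, gradDot, mul_comm] using coeff_succ_lineRestriction x v p 0

theorem coeff_two_lineRestriction (x v : Fin n → ℝ) (p : MvPolynomial (Fin n) ℝ) :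
    (lineRestriction x v p).coeff 2 * 2 = hessQuad p x v := by
  have h : (lineRestriction x v p).coeff 2 * 2 =
      ∑ j, v j * (lineRestriction x v (pderiv j p)).coeff 1 := by
    exact_mod_cast coeff_succ_lineRestriction x v p 1
  simp only [h, coeff_one_lineRestriction, gradDot, hessQuad, mul_sum]
  rw [sum_comm]
  exact sum_congr rfl fun a _ => sum_congr rfl fun b _ => by ring

end LineRestriction

namespace PointedCone

variable {E ι : Type*} [AddCommGroup E] [Module ℝ E] [Fintype ι]

theorem mem_hull_range_iff {w : ι → E} {x : E} :
    x ∈ hull ℝ (Set.range w) ↔ ∃ c : ι → ℝ, (∀ i, 0 ≤ c i) ∧ ∑ i, c i • w i = x := by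
  rw [Submodule.mem_span_range_iff_exists_fun]
  constructor
  · rintro ⟨c, rfl⟩
    exact ⟨fun i => c i, fun i => (c i).2, rfl⟩
  · rintro ⟨c, hc, rfl⟩
    exact ⟨fun i => ⟨c i, hc i⟩, rfl⟩

variable [TopologicalSpace E] [IsTopologicalAddGroup E] [ContinuousSMul ℝ E]

theorem isClosed_hull_range_of_pos [T2Space E] (w : ι → E) (ℓ : StrongDual ℝ E)
    (hℓ : ∀ i, 0 < ℓ (w i)) : IsClosed (hull ℝ (Set.range w) : Set E) := by
  set L : (ι → ℝ) → E := fun c => ∑ i, c i • w i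
  have hL : Continuous L := by fun_prop
  -- Points `∑ cᵢ • wᵢ` of the cone with `ℓ ≤ B` have `0 ≤ cᵢ ≤ B / ℓ (wᵢ)`, so near any point
  -- the cone is the image of a compact set of coefficients.
  refine closure_subset_iff_isClosed.1 fun x hx => ?_
  set B := ℓ x + 1
  set P : Set (ι → ℝ) := {c | 0 ≤ c ∧ ℓ (L c) ≤ B}
  have hP : IsCompact P := by
    refine (isCompact_Icc (a := 0) (b := fun i => B / ℓ (w i))).of_isClosed_subset
      ((isClosed_le continuous_const continuous_id).inter
        (isClosed_le (ℓ.continuous.comp hL) continuous_const)) fun c hc => ⟨hc.1, fun i => ?_⟩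
    rw [le_div_iff₀ (hℓ i)]
    calc c i * ℓ (w i) ≤ ∑ j, c j * ℓ (w j) :=
          single_le_sum (fun j _ => mul_nonneg (hc.1 j) (hℓ j).le) (mem_univ i)
      _ = ℓ (L c) := by simp [L]
      _ ≤ B := hc.2
  have hPC : L '' P ⊆ hull ℝ (Set.range w) := by
    rintro _ ⟨c, hc, rfl⟩
    exact mem_hull_range_iff.2 ⟨c, hc.1, rfl⟩
  have hCP : {y | ℓ y < B} ∩ hull ℝ (Set.range w) ⊆ L '' P := by
    rintro y ⟨hy, hyC⟩
    obtain ⟨c, hc, rfl⟩ := mem_hull_range_iff.1 hyC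
    exact ⟨c, ⟨hc, hy.le⟩, rfl⟩
  have hxV : x ∈ {y | ℓ y < B} := by simp [B]
  have hopen : IsOpen {y | ℓ y < B} := isOpen_lt ℓ.continuous continuous_const
  exact hPC ((hP.image hL).isClosed.closure_subset_iff.2 hCP (hopen.inter_closure ⟨hxV, hx⟩))

theorem mem_hull_range_of_forall_nonneg [LocallyConvexSpace ℝ E] [T2Space E] (w : ι → E)
    (ℓ : StrongDual ℝ E) (hℓ : ∀ i, 0 < ℓ (w i)) {x : E}
    (hx : ∀ φ : StrongDual ℝ E, (∀ i, 0 ≤ φ (w i)) → 0 ≤ φ x) :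
    x ∈ hull ℝ (Set.range w) := by
  let C : ProperCone ℝ E := ⟨hull ℝ (Set.range w), isClosed_hull_range_of_pos w ℓ hℓ⟩
  by_contra hxC
  obtain ⟨φ, hφC, hφx⟩ := C.hyperplane_separation_point hxC
  exact hφx.not_ge (hx φ fun i => hφC _ (subset_hull ⟨i, rfl⟩))

end PointedCone

theorem exists_nonneg_sum_smul_eq_of_dotProduct_nonneg {ι κ : Type*} [Fintype ι] [Fintype κ]
    [DecidableEq κ] (w : ι → κ → ℝ) {d : κ → ℝ} (hd : ∀ i, 0 < w i ⬝ᵥ d) {x : κ → ℝ}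
    (hx : ∀ v, (∀ i, 0 ≤ w i ⬝ᵥ v) → 0 ≤ x ⬝ᵥ v) :
    ∃ c : ι → ℝ, (∀ i, 0 ≤ c i) ∧ ∑ i, c i • w i = x := by
  have hdual : ∀ φ : StrongDual ℝ (κ → ℝ), ∀ y, φ y = y ⬝ᵥ (dotProductEquiv ℝ κ).symm φ := by
    intro φ y
    rw [dotProduct_comm]
    exact (LinearMap.congr_fun ((dotProductEquiv ℝ κ).apply_symm_apply φ.toLinearMap) y).symm
  refine PointedCone.mem_hull_range_iff.1 <| PointedCone.mem_hull_range_of_forall_nonneg w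
    (LinearMap.toContinuousLinearMap (dotProductEquiv ℝ κ d)) (fun i => ?_) fun φ hφ => ?_
  · simpa [dotProduct_comm] using hd i
  · simp only [hdual] at hφ ⊢
    exact hx _ hφ

namespace Polynomial

theorem eventually_eval_pos_of_coeff_pos (p : ℝ[X]) {k : ℕ} (hlow : ∀ i < k, p.coeff i = 0)
    (hk : 0 < p.coeff k) : ∀ᶠ t in 𝓝[>] (0 : ℝ), 0 < p.eval t := by
  obtain ⟨q, rfl⟩ := X_pow_dvd_iff.2 hlow
  rw [coeff_X_pow_mul', if_pos le_rfl, Nat.sub_self, coeff_zero_eq_eval_zero] at hk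
  filter_upwards [nhdsWithin_le_nhds ((q.continuous.tendsto 0).eventually (lt_mem_nhds hk)),
    self_mem_nhdsWithin] with t hq ht
  simpa using mul_pos (pow_pos ht k) hq

theorem coeff_nonneg_of_eventually_eval_nonneg (p : ℝ[X]) {k : ℕ}
    (hlow : ∀ i < k, p.coeff i = 0) (h : ∀ᶠ t in 𝓝[>] (0 : ℝ), 0 ≤ p.eval t) : 0 ≤ p.coeff k := by
  by_contra! hk
  have hneg := eventually_eval_pos_of_coeff_pos (-p) (by simpa using hlow) (by simpa using hk)
  obtain ⟨t, h1, h2⟩ := (h.and hneg).exists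
  simp only [eval_neg, neg_pos] at h2
  exact h2.not_ge h1

end Polynomial

theorem gradDot_add_smul {n : ℕ} (p : MvPolynomial (Fin n) ℝ) (x v w : Fin n → ℝ) (c : ℝ) :
    gradDot p x (v + c • w) = gradDot p x v + c * gradDot p x w := by
  show dotProduct _ _ = dotProduct _ _ + c * dotProduct _ _
  rw [dotProduct_add, dotProduct_smul, smul_eq_mul]

section FirstOrder

variable {n : ℕ} {p : MvPolynomial (Fin n) ℝ} {x v : Fin n → ℝ}

theorem eventually_eval_pos_of_gradDot_pos (hp : eval x p = 0) (hv : 0 < gradDot p x v) :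
    ∀ᶠ t in 𝓝[>] (0 : ℝ), 0 < eval (x + t • v) p := by
  simpa only [eval_lineRestriction] using (lineRestriction x v p).eventually_eval_pos_of_coeff_pos
    (k := 1) (by simpa [coeff_zero_lineRestriction]) (by rwa [coeff_one_lineRestriction])

theorem gradDot_nonneg_of_eventually_nonneg (hp : eval x p = 0)
    (h : ∀ᶠ t in 𝓝[>] (0 : ℝ), 0 ≤ eval (x + t • v) p) : 0 ≤ gradDot p x v := by
  rw [← coeff_one_lineRestriction]
  exact (lineRestriction x v p).coeff_nonneg_of_eventually_eval_nonneg
    (by simpa [coeff_zero_lineRestriction]) (by simpa only [eval_lineRestriction])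

theorem StrictQuasiconcaveAt.gradDot_pos_of_eventually_nonneg (hqc : StrictQuasiconcaveAt p x)
    (hp : eval x p = 0) (hv : v ≠ 0) (h : ∀ᶠ t in 𝓝[>] (0 : ℝ), 0 ≤ eval (x + t • v) p) :
    0 < gradDot p x v := by
  refine (gradDot_nonneg_of_eventually_nonneg hp h).lt_of_ne fun hgrad => ?_
  have hcoeff : 0 ≤ (lineRestriction x v p).coeff 2 :=
    (lineRestriction x v p).coeff_nonneg_of_eventually_eval_nonneg
      (fun i hi => by
        interval_cases i
        · rwa [coeff_zero_lineRestriction]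
        · rw [coeff_one_lineRestriction, hgrad])
      (by simpa only [eval_lineRestriction])
  have hhess := hqc v hv hgrad.symm
  rw [← coeff_two_lineRestriction] at hhess
  linarith

end FirstOrder

theorem gradDot_nonneg_of_linearized_feasible {n m : ℕ} {u : Fin n → ℝ}
    {f : MvPolynomial (Fin n) ℝ} {g : Fin m → MvPolynomial (Fin n) ℝ} {U : Set (Fin n → ℝ)}
    (hU : U ∈ 𝓝 u) (hf : ∀ y ∈ U ∩ Sset g, 0 ≤ eval y f) (hfu : eval u f = 0)
    (hgu : ∀ i, eval u (g i) = 0) {d : Fin n → ℝ} (hd : ∀ i, 0 < gradDot (g i) u d)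
    {v : Fin n → ℝ} (hv : ∀ i, 0 ≤ gradDot (g i) u v) : 0 ≤ gradDot f u v := by
  have hperturbed : ∀ ε > 0, 0 ≤ gradDot f u v + ε * gradDot f u d := by
    intro ε hε
    rw [← gradDot_add_smul]
    have hUt : ∀ᶠ t in 𝓝[>] (0 : ℝ), u + t • (v + ε • d) ∈ U :=
      nhdsWithin_le_nhds <| (Continuous.tendsto' (by fun_prop) 0 u (by simp)).eventually_mem hU
    have hgt : ∀ᶠ t in 𝓝[>] (0 : ℝ), ∀ i, 0 < eval (u + t • (v + ε • d)) (g i) :=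
      eventually_all.2 fun i => eventually_eval_pos_of_gradDot_pos (hgu i) <| by
        rw [gradDot_add_smul]
        exact add_pos_of_nonneg_of_pos (hv i) (mul_pos hε (hd i))
    refine gradDot_nonneg_of_eventually_nonneg hfu ?_
    filter_upwards [hUt, hgt] with t hU hg
    exact hf _ ⟨hU, fun i => (hg i).le⟩
  have hlim : Tendsto (fun ε => gradDot f u v + ε * gradDot f u d) (𝓝[>] 0) (𝓝 (gradDot f u v)) :=
    (Continuous.tendsto' (by fun_prop) 0 _ (by simp)).mono_left nhdsWithin_le_nhds
  exact ge_of_tendsto hlim (eventually_nhdsWithin_of_forall hperturbed)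

theorem statement_14 {n m : ℕ} (u : Fin n → ℝ) (f : MvPolynomial (Fin n) ℝ)
    (g : Fin m → MvPolynomial (Fin n) ℝ) (U : Set (Fin n → ℝ)) (hU : U ∈ nhds u)
    (hconv : Convex ℝ (U ∩ Sset g)) (hns : ¬ ∃ z, U ∩ Sset g = {z})
    (hqc : ∀ i, StrictQuasiconcaveAt (g i) u)
    (hf : ∀ y ∈ U ∩ Sset g, 0 ≤ eval y f)
    (hfu : eval u f = 0) (hgu : ∀ i, eval u (g i) = 0) :
    ∃ lam : Fin m → ℝ, (∀ i, 0 ≤ lam i) ∧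
      ∀ j : Fin n, eval u (pderiv j f) = ∑ i, lam i * eval u (pderiv j (g i)) := by
  have huS : u ∈ U ∩ Sset g := ⟨mem_of_mem_nhds hU, fun i => (hgu i).ge⟩
  obtain ⟨w, hwS, hwu⟩ : ∃ w ∈ U ∩ Sset g, w ≠ u := by
    by_contra! h
    exact hns ⟨u, Set.eq_singleton_iff_unique_mem.2 ⟨huS, h⟩⟩
  have hsegment : ∀ᶠ t in 𝓝[>] (0 : ℝ), u + t • (w - u) ∈ U ∩ Sset g := by
    filter_upwards [Ioo_mem_nhdsGT one_pos] with t ht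
    exact hconv.add_smul_sub_mem huS hwS ⟨ht.1.le, ht.2.le⟩
  have hd : ∀ i, 0 < gradDot (g i) u (w - u) := fun i =>
    (hqc i).gradDot_pos_of_eventually_nonneg (hgu i) (sub_ne_zero.2 hwu)
      (hsegment.mono fun t ht => ht.2 i)
  obtain ⟨lam, hlam, hsum⟩ := exists_nonneg_sum_smul_eq_of_dotProduct_nonneg
    (fun i j => eval u (pderiv j (g i))) hd (x := fun j => eval u (pderiv j f))
    fun v hv => gradDot_nonneg_of_linearized_feasible hU hf hfu hgu hd hv
  exact ⟨lam, hlam, fun j => by simpa [Finset.sum_apply] using (congrFun hsum j).symm⟩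
end

section
/- Let B ⊆ ℝⁿ be a closed Euclidean ball, let g₁,…,g_m ∈ ℝ[X₁,…,Xₙ] be strictly quasiconcave at every point of B, and set g := (g₁,…,g_m). Then: (a) S(g) ∩ B is convex; (b) every nonzero linear form f ∈ ℝ[X₁,…,Xₙ] (nonzero homogeneous polynomial of degree 1) has at most one minimizer on S(g) ∩ B; (c) if u is a minimizer of a nonzero linear form f on S(g) ∩ B and I := {i ∈ {1,…,m} : gᵢ(u) = 0}, then u is also a minimizer of f on the set {x ∈ B : gᵢ(x) ≥ 0 for all i ∈ I}, which contains S(g) ∩ B. -/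
open MvPolynomial Finset

/-!
Restricted to a segment in `B`, a polynomial `gᵢ` has no interior local minimum: at a critical
point its second derivative is the Hessian form in a direction orthogonal to the gradient, hence
negative. So `gᵢ > 0` on the open segment between two points where `gᵢ ≥ 0`, which gives (a).
For (b), a linear form minimized at `u ≠ v` is also minimized at their midpoint, where all `gᵢ`
are positive and which lies in the interior of the strictly convex ball `B`; but a nonzero
linear form has no local minimum. For (c), the inactive constraints stay strict near `u`, so `u`
is a local minimizer on the convex set cut out by the active ones, hence a global one.
-/

theorem not_isLocalMin_of_deriv_deriv_neg {f : ℝ → ℝ} {x₀ : ℝ} (hf : deriv (deriv f) x₀ < 0)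
    (hd : deriv f x₀ = 0) (hc : ContinuousAt f x₀) : ¬ IsLocalMin f x₀ := by
  intro hmin
  have hconst : f =ᶠ[nhds x₀] fun _ => f x₀ := by
    filter_upwards [isLocalMax_of_deriv_deriv_neg hf hd hc, hmin] with x hmax hmin'
    exact le_antisymm hmax hmin'
  simp [hconst.deriv.deriv_eq] at hf

section LineRestriction

variable {n : ℕ} (x v : Fin n → ℝ)

theorem gradDot_mul_X (p : MvPolynomial (Fin n) ℝ) (i : Fin n) :
    gradDot (p * X i) x v = gradDot p x v * x i + eval x p * v i := by
  simp only [gradDot, pderiv_mul, pderiv_X, map_add, map_mul, eval_X, add_mul, sum_add_distrib,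
    sum_mul]
  congr 1
  · exact sum_congr rfl fun j _ => by ring
  · simp [Pi.single_apply, mul_comm]

theorem hasDerivAt_eval_add_smul (p : MvPolynomial (Fin n) ℝ) (t : ℝ) :
    HasDerivAt (fun t => eval (x + t • v) p) (gradDot p (x + t • v) v) t := by
  induction p using MvPolynomial.induction_on generalizing t with
  | C a => simpa [gradDot] using hasDerivAt_const t a
  | add p q hp hq =>
    simpa [gradDot, add_mul, sum_add_distrib] using (hp t).fun_add (hq t)
  | mul_X p i hp =>
    have hXi : HasDerivAt (fun t => x i + t * v i) (v i) t := by
      simpa using ((hasDerivAt_id t).mul_const (v i)).const_add (x i)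
    simpa [gradDot_mul_X] using (hp t).fun_mul hXi

theorem hasDerivAt_gradDot_add_smul (p : MvPolynomial (Fin n) ℝ) (t : ℝ) :
    HasDerivAt (fun t => gradDot p (x + t • v) v) (hessQuad p (x + t • v) v) t := by
  have hsum := HasDerivAt.fun_sum (u := univ) fun i _ =>
    (hasDerivAt_eval_add_smul x v (pderiv i p) t).mul_const (v i)
  refine hsum.congr_deriv ?_
  simp only [hessQuad, gradDot, sum_mul]
  rw [sum_comm]
  exact sum_congr rfl fun a _ => sum_congr rfl fun b _ => by ring

theorem StrictQuasiconcaveAt.not_isLocalMin_eval_add_smul {p : MvPolynomial (Fin n) ℝ} {t₀ : ℝ}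
    (hp : StrictQuasiconcaveAt p (x + t₀ • v)) (hv : v ≠ 0) :
    ¬ IsLocalMin (fun t => eval (x + t • v) p) t₀ := by
  intro hmin
  have hderiv : deriv (fun t => eval (x + t • v) p) = fun t => gradDot p (x + t • v) v :=
    funext fun t => (hasDerivAt_eval_add_smul x v p t).deriv
  have hgrad : gradDot p (x + t₀ • v) v = 0 := by
    rw [← congrFun hderiv t₀]
    exact hmin.deriv_eq_zero
  refine not_isLocalMin_of_deriv_deriv_neg ?_ (congrFun hderiv t₀ ▸ hgrad)
    (hasDerivAt_eval_add_smul x v p t₀).continuousAt hmin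
  rw [hderiv, (hasDerivAt_gradDot_add_smul x v p t₀).deriv]
  exact hp v hv hgrad

end LineRestriction

section Superlevel

variable {n : ℕ} {B : Set (Fin n → ℝ)} {p : MvPolynomial (Fin n) ℝ}

theorem eval_pos_of_mem_openSegment (hB : Convex ℝ B) (hp : ∀ y ∈ B, StrictQuasiconcaveAt p y)
    {x y z : Fin n → ℝ} (hx : x ∈ B) (hy : y ∈ B) (hxy : x ≠ y) (hpx : 0 ≤ eval x p)
    (hpy : 0 ≤ eval y p) (hz : z ∈ openSegment ℝ x y) : 0 < eval z p := by
  rw [openSegment_eq_image'] at hz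
  obtain ⟨t, ht, rfl⟩ := hz
  set φ : ℝ → ℝ := fun s => eval (x + s • (y - x)) p
  by_contra! hφt
  obtain ⟨t₀, ht₀, hmin₀⟩ := isCompact_Icc.exists_isMinOn (Set.nonempty_Icc.2 zero_le_one)
    (continuous_eval p |>.comp (by fun_prop) |>.continuousOn : ContinuousOn φ (Set.Icc 0 1))
  -- If `φ` attains its minimum only at an endpoint, that minimum is `≥ 0 ≥ φ t`, so `t` is a
  -- minimizer as well.
  obtain ⟨s, hs, hmin⟩ : ∃ s ∈ Set.Ioo (0 : ℝ) 1, IsMinOn φ (Set.Icc 0 1) s := by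
    by_cases hint : t₀ ∈ Set.Ioo (0 : ℝ) 1
    · exact ⟨t₀, hint, hmin₀⟩
    have hφt₀ : 0 ≤ φ t₀ := by
      rcases Set.eq_endpoints_or_mem_Ioo_of_mem_Icc ht₀ with rfl | rfl | h
      · simpa [φ] using hpx
      · simpa [φ] using hpy
      · exact absurd h hint
    exact ⟨t, ht, fun s hs => (hφt.trans hφt₀).trans (hmin₀ hs)⟩
  have hqc := hp _ (hB.add_smul_sub_mem hx hy (Set.Ioo_subset_Icc_self hs))
  exact hqc.not_isLocalMin_eval_add_smul x (y - x) (sub_ne_zero.2 hxy.symm)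
    (hmin.isLocalMin (Icc_mem_nhds hs.1 hs.2))

theorem convex_inter_setOf_eval_nonneg (hB : Convex ℝ B)
    (hp : ∀ y ∈ B, StrictQuasiconcaveAt p y) :
    Convex ℝ (B ∩ {y | 0 ≤ eval y p}) := by
  refine convex_iff_openSegment_subset.2 fun x hx y hy z hz => ?_
  rcases eq_or_ne x y with rfl | hxy
  · rw [openSegment_same, Set.mem_singleton_iff] at hz
    rwa [hz]
  exact ⟨hB.openSegment_subset hx.1 hy.1 hz,
    (eval_pos_of_mem_openSegment hB hp hx.1 hy.1 hxy hx.2 hy.2 hz).le⟩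

theorem convex_inter_setOf_forall_eval_nonneg {ι : Type*} (hB : Convex ℝ B)
    {g : ι → MvPolynomial (Fin n) ℝ} (hg : ∀ i, ∀ y ∈ B, StrictQuasiconcaveAt (g i) y) :
    Convex ℝ (B ∩ {y | ∀ i, 0 ≤ eval y (g i)}) := fun _ hx _ hy _ _ ha hb hab =>
  ⟨hB hx.1 hy.1 ha hb hab, fun i =>
    (convex_inter_setOf_eval_nonneg hB (hg i) ⟨hx.1, hx.2 i⟩ ⟨hy.1, hy.2 i⟩ ha hb hab).2⟩

end Superlevel

section EuclideanBall

variable {n : ℕ}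

theorem sum_sq_add_smul_sub_sub (c u v : Fin n → ℝ) (t : ℝ) :
    ∑ i, ((u + t • (v - u)) i - c i) ^ 2 = (1 - t) * ∑ i, (u i - c i) ^ 2
      + t * ∑ i, (v i - c i) ^ 2 - t * (1 - t) * ∑ i, (u i - v i) ^ 2 := by
  simp only [mul_sum, ← sum_add_distrib, ← sum_sub_distrib]
  refine sum_congr rfl fun i _ => ?_
  simp only [Pi.add_apply, Pi.smul_apply, Pi.sub_apply, smul_eq_mul]
  ring

theorem strictConvex_setOf_sum_sq_sub_le (c : Fin n → ℝ) (ρ : ℝ) :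
    StrictConvex ℝ {y : Fin n → ℝ | ∑ i, (y i - c i) ^ 2 ≤ ρ} := by
  refine strictConvex_iff_openSegment_subset.2 fun u hu v hv huv z hz => ?_
  have hopen : IsOpen {y : Fin n → ℝ | ∑ i, (y i - c i) ^ 2 < ρ} :=
    isOpen_lt (by fun_prop) continuous_const
  refine hopen.subset_interior_iff.2 (Set.ofPred_subset_ofPred.2 fun _ => le_of_lt) ?_
  rw [openSegment_eq_image'] at hz
  obtain ⟨t, ⟨ht₀, ht₁⟩, rfl⟩ := hz
  have hdist : 0 < ∑ i, (u i - v i) ^ 2 := by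
    obtain ⟨i, hi⟩ := Function.ne_iff.1 huv
    exact sum_pos' (fun j _ => sq_nonneg _) ⟨i, mem_univ i, sq_pos_of_ne_zero (sub_ne_zero.2 hi)⟩
  simp only [Set.mem_ofPred_eq] at hu hv ⊢
  rw [sum_sq_add_smul_sub_sub]
  nlinarith [mul_pos ht₀ (sub_pos.2 ht₁)]

end EuclideanBall

theorem not_isLocalMin_dotProduct {ι : Type*} [Fintype ι] {w : ι → ℝ} (hw : w ≠ 0) (x : ι → ℝ) :
    ¬ IsLocalMin (w ⬝ᵥ ·) x := by
  intro hmin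
  have hline : IsLocalMin (fun t : ℝ => w ⬝ᵥ (x - t • w)) 0 := by
    refine IsLocalMin.comp_continuous (f := (w ⬝ᵥ ·)) (g := fun t : ℝ => x - t • w) (b := 0) ?_
      (by fun_prop)
    simpa using hmin
  have hderiv : HasDerivAt (fun t : ℝ => w ⬝ᵥ (x - t • w)) (-(w ⬝ᵥ w)) 0 := by
    simp only [dotProduct_sub, dotProduct_smul, smul_eq_mul]
    simpa using ((hasDerivAt_id (0 : ℝ)).mul_const (w ⬝ᵥ w)).const_sub (w ⬝ᵥ x)
  exact hw (dotProduct_self_eq_zero.1 (neg_eq_zero.1 (hline.hasDerivAt_eq_zero hderiv)))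

section Minimizers

variable {n : ℕ} {ι : Type*} [Finite ι] {B : Set (Fin n → ℝ)} {g : ι → MvPolynomial (Fin n) ℝ}
  {w u : Fin n → ℝ}

theorem eq_of_isMinOn_dotProduct (hB : StrictConvex ℝ B)
    (hg : ∀ i, ∀ y ∈ B, StrictQuasiconcaveAt (g i) y) (hw : w ≠ 0) {v : Fin n → ℝ}
    (hu : u ∈ B ∩ {y | ∀ i, 0 ≤ eval y (g i)}) (hv : v ∈ B ∩ {y | ∀ i, 0 ≤ eval y (g i)})
    (hmu : IsMinOn (w ⬝ᵥ ·) (B ∩ {y | ∀ i, 0 ≤ eval y (g i)}) u)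
    (hmv : IsMinOn (w ⬝ᵥ ·) (B ∩ {y | ∀ i, 0 ≤ eval y (g i)}) v) : u = v := by
  by_contra huv
  set z := (1 / 2 : ℝ) • u + (1 / 2 : ℝ) • v
  have hz : z ∈ openSegment ℝ u v := ⟨1 / 2, 1 / 2, by norm_num, by norm_num, by norm_num, rfl⟩
  have hzB : z ∈ interior B := strictConvex_iff_openSegment_subset.1 hB hu.1 hv.1 huv hz
  have hgz : ∀ i, 0 < eval z (g i) := fun i =>
    eval_pos_of_mem_openSegment hB.convex (hg i) hu.1 hv.1 huv (hu.2 i) (hv.2 i) hz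
  have hnhds : B ∩ {y | ∀ i, 0 ≤ eval y (g i)} ∈ nhds z := by
    have hopen : IsOpen (interior B ∩ ⋂ i, {y | 0 < eval y (g i)}) :=
      isOpen_interior.inter (isOpen_iInter_of_finite fun i => isOpen_lt continuous_const
        (continuous_eval _))
    refine Filter.mem_of_superset (hopen.mem_nhds ⟨hzB, Set.mem_iInter.2 hgz⟩) ?_
    exact fun y hy => ⟨interior_subset hy.1, fun i => (Set.mem_iInter.1 hy.2 i).le⟩
  have hmz : IsMinOn (w ⬝ᵥ ·) (B ∩ {y | ∀ i, 0 ≤ eval y (g i)}) z := by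
    have hvu : w ⬝ᵥ v = w ⬝ᵥ u := le_antisymm (hmv hu) (hmu hv)
    intro y hy
    have : w ⬝ᵥ z = w ⬝ᵥ u := by
      simp only [z, dotProduct_add, dotProduct_smul, smul_eq_mul, hvu]; ring
    simpa [this] using hmu hy
  exact not_isLocalMin_dotProduct hw z (hmz.isLocalMin hnhds)

theorem isMinOn_dotProduct_of_active (hB : Convex ℝ B)
    (hg : ∀ i, ∀ y ∈ B, StrictQuasiconcaveAt (g i) y)
    (hu : u ∈ B ∩ {y | ∀ i, 0 ≤ eval y (g i)})
    (hmu : IsMinOn (w ⬝ᵥ ·) (B ∩ {y | ∀ i, 0 ≤ eval y (g i)}) u) :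
    IsMinOn (w ⬝ᵥ ·) {y | y ∈ B ∧ ∀ i, eval u (g i) = 0 → 0 ≤ eval y (g i)} u := by
  have hconv : Convex ℝ {y | y ∈ B ∧ ∀ i, eval u (g i) = 0 → 0 ≤ eval y (g i)} := by
    convert convex_inter_setOf_forall_eval_nonneg hB
      (g := fun i : {i // eval u (g i) = 0} => g i) fun i => hg i using 1
    ext y
    simp [Subtype.forall]
  have hinactive : ∀ᶠ y in nhds u, ∀ i, eval u (g i) ≠ 0 → 0 < eval y (g i) := by
    refine Filter.eventually_all.2 fun i => ?_
    by_cases hi : eval u (g i) = 0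
    · exact Filter.Eventually.of_forall fun _ h => absurd hi h
    · exact (continuousAt_const.eventually_lt (continuous_eval _).continuousAt
        (lt_of_le_of_ne (hu.2 i) (Ne.symm hi))).mono fun _ h _ => h
  have hlocal :
      IsLocalMinOn (w ⬝ᵥ ·) {y | y ∈ B ∧ ∀ i, eval u (g i) = 0 → 0 ≤ eval y (g i)} u := by
    refine hmu.filter_mono (Filter.le_principal_iff.2 (mem_nhdsWithin_iff_eventually.2 ?_))
    filter_upwards [hinactive] with y hy hyK
    refine ⟨hyK.1, fun i => ?_⟩
    by_cases hi : eval u (g i) = 0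
    · exact hyK.2 i hi
    · exact (hy i hi).le
  exact IsMinOn.of_isLocalMinOn_of_convexOn ⟨hu.1, fun i _ => hu.2 i⟩ hlocal
    ((dotProductBilin ℝ ℝ w).convexOn hconv)

end Minimizers

theorem statement_15_general {n m : ℕ} (c : Fin n → ℝ) (r : ℝ)
    (B : Set (Fin n → ℝ)) (hB : B = {y | ∑ i, (y i - c i) ^ 2 ≤ r ^ 2})
    (g : Fin m → MvPolynomial (Fin n) ℝ)
    (hqc : ∀ i, ∀ y ∈ B, StrictQuasiconcaveAt (g i) y) :
    Convex ℝ (Sset g ∩ B) ∧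
    (∀ w : Fin n → ℝ, w ≠ 0 → ∀ u v : Fin n → ℝ,
      u ∈ Sset g ∩ B → v ∈ Sset g ∩ B →
      (∀ y ∈ Sset g ∩ B, ∑ i, w i * u i ≤ ∑ i, w i * y i) →
      (∀ y ∈ Sset g ∩ B, ∑ i, w i * v i ≤ ∑ i, w i * y i) → u = v) ∧
    (∀ w : Fin n → ℝ, w ≠ 0 → ∀ u : Fin n → ℝ, u ∈ Sset g ∩ B →
      (∀ y ∈ Sset g ∩ B, ∑ i, w i * u i ≤ ∑ i, w i * y i) →
      (Sset g ∩ B ⊆ {y | y ∈ B ∧ ∀ i, eval u (g i) = 0 → 0 ≤ eval y (g i)} ∧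
        ∀ y ∈ {y | y ∈ B ∧ ∀ i, eval u (g i) = 0 → 0 ≤ eval y (g i)},
          ∑ i, w i * u i ≤ ∑ i, w i * y i)) := by
  have hball : StrictConvex ℝ B := hB ▸ strictConvex_setOf_sum_sq_sub_le c (r ^ 2)
  have hK : Sset g ∩ B = B ∩ {y | ∀ i, 0 ≤ eval y (g i)} := Set.inter_comm _ _
  refine ⟨hK ▸ convex_inter_setOf_forall_eval_nonneg hball.convex hqc, ?_, ?_⟩
  · intro w hw u v hu hv hmu hmv
    rw [hK] at hu hv hmu hmv
    exact eq_of_isMinOn_dotProduct hball hqc hw hu hv hmu hmv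
  · intro w _ u hu hmu
    rw [hK] at hu hmu
    exact ⟨fun y hy => ⟨hy.2, fun i _ => hy.1 i⟩,
      isMinOn_dotProduct_of_active hball.convex hqc hu hmu⟩

theorem statement_15 {n m : ℕ} (c : Fin n → ℝ) (r : ℝ) (hr : 0 ≤ r)
    (B : Set (Fin n → ℝ)) (hB : B = {y | ∑ i, (y i - c i) ^ 2 ≤ r ^ 2})
    (g : Fin m → MvPolynomial (Fin n) ℝ)
    (hqc : ∀ i, ∀ y ∈ B, StrictQuasiconcaveAt (g i) y) :
    Convex ℝ (Sset g ∩ B) ∧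
    (∀ w : Fin n → ℝ, w ≠ 0 → ∀ u v : Fin n → ℝ,
      u ∈ Sset g ∩ B → v ∈ Sset g ∩ B →
      (∀ y ∈ Sset g ∩ B, ∑ i, w i * u i ≤ ∑ i, w i * y i) →
      (∀ y ∈ Sset g ∩ B, ∑ i, w i * v i ≤ ∑ i, w i * y i) → u = v) ∧
    (∀ w : Fin n → ℝ, w ≠ 0 → ∀ u : Fin n → ℝ, u ∈ Sset g ∩ B →
      (∀ y ∈ Sset g ∩ B, ∑ i, w i * u i ≤ ∑ i, w i * y i) →
      (Sset g ∩ B ⊆ {y | y ∈ B ∧ ∀ i, eval u (g i) = 0 → 0 ≤ eval y (g i)} ∧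
        ∀ y ∈ {y | y ∈ B ∧ ∀ i, eval u (g i) = 0 → 0 ≤ eval y (g i)},
          ∑ i, w i * u i ≤ ∑ i, w i * y i)) :=
  statement_15_general c r B hB g hqc
end
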